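/- arXiv:2012.11168 — 5 statements merged into one kernel-verified Lean document; each statement's English description precedes it below -/
import Mathlib

section
/- In the power allocation game, suppose additionally that λ_i > 0 for every i ∈ {1,…,M}. Then a profile p* ∈ P is a Nash equilibrium if and only if it is a fixed point of the best-response map, i.e., if and only if p*_i = [α_i·W/λ_i − 1/g_i(p*)]_0^{p_i^max} for every i ∈ {1,…,M}. -/
open Finset

lemma logdiff_le {g : ℝ} (hg : 0 < g) {q s : ℝ} (hq : 0 ≤ q) (hs : 0 ≤ s) :
    Real.log (1+g*q) - Real.log (1+g*s) ≤ g*(q-s)/(1+g*s) := by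
  have h1 : 0 < 1+g*q := by nlinarith
  have h2 : 0 < 1+g*s := by nlinarith
  have h := Real.log_le_sub_one_of_pos (div_pos h1 h2)
  rw [Real.log_div h1.ne' h2.ne'] at h
  have he : (1+g*q)/(1+g*s) - 1 = g*(q-s)/(1+g*s) := by field_simp; ring
  rw [he] at h; exact h

lemma logdiff_lt {g : ℝ} (hg : 0 < g) {q s : ℝ} (hq : 0 ≤ q) (hs : 0 ≤ s) (hne : q ≠ s) :
    Real.log (1+g*q) - Real.log (1+g*s) < g*(q-s)/(1+g*s) := by
  have h1 : 0 < 1+g*q := by nlinarith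
  have h2 : 0 < 1+g*s := by nlinarith
  have hne1 : (1+g*q)/(1+g*s) ≠ 1 := by
    intro heq
    rw [div_eq_one_iff_eq h2.ne'] at heq
    exact hne (mul_left_cancel₀ hg.ne' (by linarith))
  have h := Real.log_lt_sub_one_of_pos (div_pos h1 h2) hne1
  rw [Real.log_div h1.ne' h2.ne'] at h
  have he : (1+g*q)/(1+g*s) - 1 = g*(q-s)/(1+g*s) := by field_simp; ring
  rw [he] at h; exact h

lemma fdiff_le (c lam : ℝ) (hc : 0 ≤ c) {g : ℝ} (hg : 0 < g) {q s : ℝ} (hq : 0 ≤ q) (hs : 0 ≤ s) :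
    (c * Real.log (1+g*q) - lam*q) - (c * Real.log (1+g*s) - lam*s)
      ≤ (q-s) * (c*g/(1+g*s) - lam) := by
  have h2 : 0 < 1+g*s := by nlinarith
  have h := mul_le_mul_of_nonneg_left (logdiff_le hg hq hs) hc
  have he : c * (g*(q-s)/(1+g*s)) = (q-s)*(c*g/(1+g*s)) := by field_simp
  rw [he] at h
  have he2 : (q-s)*(c*g/(1+g*s) - lam) = (q-s)*(c*g/(1+g*s)) - lam*q + lam*s := by ring
  rw [he2]; linarith [h]

lemma fdiff_lt (c lam : ℝ) (hc : 0 < c) {g : ℝ} (hg : 0 < g) {q s : ℝ} (hq : 0 ≤ q) (hs : 0 ≤ s)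
    (hne : q ≠ s) :
    (c * Real.log (1+g*q) - lam*q) - (c * Real.log (1+g*s) - lam*s)
      < (q-s) * (c*g/(1+g*s) - lam) := by
  have h2 : 0 < 1+g*s := by nlinarith
  have h := mul_lt_mul_of_pos_left (logdiff_lt hg hq hs hne) hc
  have he : c * (g*(q-s)/(1+g*s)) = (q-s)*(c*g/(1+g*s)) := by field_simp
  rw [he] at h
  have he2 : (q-s)*(c*g/(1+g*s) - lam) = (q-s)*(c*g/(1+g*s)) - lam*q + lam*s := by ring
  rw [he2]; linarith [h]

lemma oneDim (c g lam b : ℝ) (hc : 0 ≤ c) (hg : 0 < g) (hl : 0 < lam) (hb : 0 < b)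
    (t : ℝ) (ht : t ∈ Set.Icc (0:ℝ) b) :
    (∀ q ∈ Set.Icc (0:ℝ) b, c * Real.log (1+g*q) - lam*q ≤ c * Real.log (1+g*t) - lam*t)
    ↔ t = max 0 (min b (c/lam - 1/g)) := by
  set x := c/lam - 1/g with hxdef
  set s := max 0 (min b x) with hsdef
  have hx : lam * g * x = c*g - lam := by rw [hxdef]; field_simp
  have hs0 : 0 ≤ s := le_max_left _ _
  have hsb : s ≤ b := max_le hb.le (min_le_left _ _)
  -- s is a maximizer
  have hmax : ∀ q ∈ Set.Icc (0:ℝ) b, c * Real.log (1+g*q) - lam*q ≤ c * Real.log (1+g*s) - lam*s := by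
    intro q hq
    have hkey := fdiff_le c lam hc hg hq.1 hs0
    have hsign : (q-s) * (c*g/(1+g*s) - lam) ≤ 0 := by
      have h2 : 0 < 1+g*s := by nlinarith
      rcases le_total x 0 with hx0 | hx0
      · -- s = 0, D ≤ 0, q ≥ 0
        have hseq : s = 0 := by
          rw [hsdef]; rw [max_eq_left]
          exact le_trans (min_le_right _ _) hx0
        have hcg : c*g ≤ lam := by
          have h3 : lam*g*x ≤ 0 := mul_nonpos_of_nonneg_of_nonpos (mul_pos hl hg).le hx0
          linarith
        rw [hseq]
        have hD : c*g/(1+g*0) - lam ≤ 0 := by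
          simp only [mul_zero, add_zero, div_one]; linarith
        have : 0 ≤ q - 0 := by linarith [hq.1]
        exact mul_nonpos_of_nonneg_of_nonpos this hD
      · rcases le_total b x with hbx | hbx
        · -- s = b, D ≥ 0, q ≤ b
          have hseq : s = b := by
            rw [hsdef, min_eq_left hbx, max_eq_right hb.le]
          have hcg : lam * (1+g*b) ≤ c*g := by nlinarith [mul_le_mul_of_nonneg_left hbx (mul_pos hl hg).le]
          rw [hseq]
          have hD : 0 ≤ c*g/(1+g*b) - lam := by
            rw [sub_nonneg, le_div_iff₀ (by nlinarith : (0:ℝ) < 1+g*b)]; linarith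
          exact mul_nonpos_of_nonpos_of_nonneg (by linarith [hq.2]) hD
        · -- s = x, D = 0
          have hseq : s = x := by
            rw [hsdef, min_eq_right hbx, max_eq_right hx0]
          have h1gx : lam * (1+g*x) = c*g := by nlinarith
          have hxpos : 0 < 1+g*x := by nlinarith
          have hD : c*g/(1+g*x) - lam = 0 := by
            rw [sub_eq_zero, div_eq_iff hxpos.ne']; linarith
          rw [hseq, hD, mul_zero]
    linarith [hkey, hsign]
  constructor
  · intro hmax_t
    -- t is also a maximizer; show t = s
    have hfs := hmax_t s ⟨hs0, hsb⟩
    have hft := hmax t ht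
    have hfeq : c * Real.log (1+g*t) - lam*t = c * Real.log (1+g*s) - lam*s := le_antisymm hft hfs
    rcases eq_or_lt_of_le hc with hc0 | hc0
    · -- c = 0
      have hxneg : x < 0 := by
        rw [hxdef, ← hc0]; simp; positivity
      have hseq : s = 0 := by
        rw [hsdef, max_eq_left (le_trans (min_le_right _ _) hxneg.le)]
      rw [hseq] at hfeq
      rw [← hc0] at hfeq
      simp only [zero_mul, zero_sub, mul_zero, sub_zero] at hfeq
      have : t = 0 := by
        have := hfeq
        nlinarith [hl]
      rw [this, hseq]
    · by_contra hne
      have hne' : t ≠ s := fun h => hne (h)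
      have hstrict := fdiff_lt c lam hc0 hg ht.1 hs0 hne'
      rw [hfeq] at hstrict
      have hpos : 0 < (t-s) * (c*g/(1+g*s) - lam) := by linarith
      have h2 : 0 < 1+g*s := by nlinarith
      rcases lt_trichotomy (c*g/(1+g*s) - lam) 0 with hD | hD | hD
      · -- D < 0 ⇒ t < s ⇒ x < s ⇒ s = max of two things < s, contradiction
        have hts : t - s < 0 := by nlinarith
        have hcg : c*g < lam*(1+g*s) := by
          have : c*g/(1+g*s) < lam := by linarith
          rw [div_lt_iff₀ h2] at this; linarith
        have hxs : x < s := by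
          have : lam*g*x < lam*g*s := by nlinarith
          exact lt_of_mul_lt_mul_left this (mul_pos hl hg).le
        have hspos : 0 < s := lt_of_le_of_lt ht.1 (by linarith)
        have : s < s := by
          calc s = max 0 (min b x) := hsdef
          _ ≤ max 0 x := max_le_max le_rfl (min_le_right _ _)
          _ < s := max_lt hspos hxs
        exact absurd this (lt_irrefl s)
      · rw [hD, mul_zero] at hpos; exact absurd hpos (lt_irrefl 0)
      · -- D > 0 ⇒ t > s and x > s ⇒ s = b can't (t ≤ b), s = something
        have hts : 0 < t - s := by nlinarith
        have hcg : lam*(1+g*s) < c*g := by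
          have : lam < c*g/(1+g*s) := by linarith
          rw [lt_div_iff₀ h2] at this; linarith
        have hxs : s < x := by
          have : lam*g*s < lam*g*x := by nlinarith
          exact lt_of_mul_lt_mul_left this (mul_pos hl hg).le
        have hsb' : s < b := lt_of_lt_of_le (by linarith : s < t) ht.2
        have : s < s := by
          calc s < min b x := lt_min hsb' hxs
          _ ≤ max 0 (min b x) := le_max_right _ _
          _ = s := hsdef.symm
        exact absurd this (lt_irrefl s)
  · intro hts
    rw [hts]; exact hmax

/-- Equivalent channel gain of player `i` under power profile `p`:
`g_i(p) = a_{i,i} / (∑_{ℓ ≠ i} a_{i,ℓ}·p_ℓ + σ²)`. -/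
noncomputable def gain (M : ℕ) (σ2 : ℝ) (a : Fin M → Fin M → ℝ)
    (p : Fin M → ℝ) (i : Fin M) : ℝ :=
  a i i / ((∑ ℓ ∈ Finset.univ.erase i, a i ℓ * p ℓ) + σ2)

/-- Payoff of player `i`: `φ_i(p) = α_i·W·log(1 + g_i(p)·p_i) − λ_i·p_i`. -/
noncomputable def payoff (M : ℕ) (W σ2 : ℝ) (α lam : Fin M → ℝ)
    (a : Fin M → Fin M → ℝ) (p : Fin M → ℝ) (i : Fin M) : ℝ :=
  α i * W * Real.log (1 + gain M σ2 a p i * p i) - lam i * p i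

/-- The joint strategy set `P = ∏_{i=1}^M [0, p_i^max]`. -/
def stratBox (M : ℕ) (pmax : Fin M → ℝ) : Set (Fin M → ℝ) :=
  {p | ∀ i, p i ∈ Set.Icc (0 : ℝ) (pmax i)}

/-- `p` is a Nash equilibrium: no player can improve its payoff by unilaterally
changing its own power within `[0, p_i^max]`. -/
def IsNE (M : ℕ) (W σ2 : ℝ) (α lam pmax : Fin M → ℝ)
    (a : Fin M → Fin M → ℝ) (p : Fin M → ℝ) : Prop :=
  ∀ i, ∀ q ∈ Set.Icc (0 : ℝ) (pmax i),
    payoff M W σ2 α lam a (Function.update p i q) i ≤ payoff M W σ2 α lam a p i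


/-- Euclidean projection of `x` onto the interval `[a, b]`. -/
noncomputable def euclidProj (a b x : ℝ) : ℝ := max a (min b x)

/-- **NE ↔ fixed point of the best response.** Suppose `λ_i > 0` for
every `i`. A profile `p* ∈ P` is a Nash equilibrium iff
`p*_i = [α_i·W/λ_i − 1/g_i(p*)]_0^{p_i^max}` for every `i`. -/
theorem nash_iff_bestResponse_fixedPoint (M : ℕ) (hM : 1 ≤ M) (W σ2 : ℝ)
    (hW : 0 < W) (hσ2 : 0 < σ2) (α lam pmax : Fin M → ℝ)
    (a : Fin M → Fin M → ℝ)
    (hα : ∀ i, 0 ≤ α i) (hlam : ∀ i, 0 < lam i) (hpmax : ∀ i, 0 < pmax i)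
    (ha : ∀ i ℓ, 0 ≤ a i ℓ) (haii : ∀ i, 0 < a i i)
    (pstar : Fin M → ℝ) (hpstar : pstar ∈ stratBox M pmax) :
    IsNE M W σ2 α lam pmax a pstar ↔
      ∀ i, pstar i =
        euclidProj 0 (pmax i) (α i * W / lam i - 1 / gain M σ2 a pstar i) := by
  
  have hgainpos : ∀ i, 0 < gain M σ2 a pstar i := by
    intro i
    unfold gain
    apply div_pos (haii i)
    have : 0 ≤ ∑ ℓ ∈ Finset.univ.erase i, a i ℓ * pstar ℓ :=
      Finset.sum_nonneg fun ℓ _ => mul_nonneg (ha i ℓ) (hpstar ℓ).1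
    linarith
  have hgainup : ∀ i q, gain M σ2 a (Function.update pstar i q) i = gain M σ2 a pstar i := by
    intro i q
    unfold gain
    congr 2
    apply Finset.sum_congr rfl
    intro ℓ hℓ
    rw [Function.update_of_ne (Finset.ne_of_mem_erase hℓ)]
  have hpay : ∀ i q, payoff M W σ2 α lam a (Function.update pstar i q) i
      = α i * W * Real.log (1 + gain M σ2 a pstar i * q) - lam i * q := by
    intro i q
    unfold payoff
    rw [hgainup, Function.update_self]
  constructor
  · intro h i
    have h1 := (oneDim (α i * W) (gain M σ2 a pstar i) (lam i) (pmax i)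
        (mul_nonneg (hα i) hW.le) (hgainpos i) (hlam i) (hpmax i) (pstar i) (hpstar i)).mp ?_
    · unfold euclidProj
      exact h1
    · intro q hq
      have h2 := h i q hq
      rw [hpay] at h2
      unfold payoff at h2
      exact h2
  · intro h i q hq
    have h1 : pstar i = max 0 (min (pmax i)
        (α i * W / lam i - 1 / gain M σ2 a pstar i)) := by
      have := h i
      unfold euclidProj at this
      exact this
    have h2 := (oneDim (α i * W) (gain M σ2 a pstar i) (lam i) (pmax i)
        (mul_nonneg (hα i) hW.le) (hgainpos i) (hlam i) (hpmax i) (pstar i) (hpstar i)).mpr h1 q hq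
    rw [hpay]
    unfold payoff
    exact h2
end

section
/- In the power allocation game with α_i > 0 for all i, define F_i(p) = λ_i − α_i·W·g_i(p)/(1 + g_i(p)·p_i) for each i ∈ {1,…,M} and p ∈ P, and define the M×M matrix Q by Q_{p,p} = α_p·W and, for p ≠ q, Q_{p,q} = −α_p·W·(a_{p,q}/a_{q,q})·(1 + σ^{−2}·∑_{i=1}^M a_{q,i}·p_i^max). If Q is a P-matrix, then F = (F_1,…,F_M) is a uniformly P-function on P: there exists a constant C > 0 such that for all profiles p, p′ ∈ P, max_{1≤i≤M} (p_i − p′_i)·(F_i(p) − F_i(p′)) ≥ C·∑_{i=1}^M (p_i − p′_i)². -/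
open Finset

/-- `F_i(p) = λ_i − α_i·W·g_i(p)/(1 + g_i(p)·p_i)`. -/
noncomputable def Fmap (M : ℕ) (W σ2 : ℝ) (α lam : Fin M → ℝ)
    (a : Fin M → Fin M → ℝ) (p : Fin M → ℝ) (i : Fin M) : ℝ :=
  lam i - α i * W * gain M σ2 a p i / (1 + gain M σ2 a p i * p i)

/-- The matrix `Q` of Theorem 1: `Q_{p,p} = α_p·W` and, for `p ≠ q`,
`Q_{p,q} = −α_p·W·(a_{p,q}/a_{q,q})·(1 + σ⁻²·∑_i a_{q,i}·p_i^max)`. -/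
noncomputable def Qmat (M : ℕ) (W σ2 : ℝ) (α pmax : Fin M → ℝ)
    (a : Fin M → Fin M → ℝ) : Matrix (Fin M) (Fin M) ℝ :=
  fun p q =>
    if p = q then α p * W
    else -(α p * W * (a p q / a q q) * (1 + σ2⁻¹ * ∑ i, a q i * pmax i))

/-- A real square matrix is a P-matrix if every principal minor is positive. -/
def IsPMatrix {n : ℕ} (A : Matrix (Fin n) (Fin n) ℝ) : Prop :=
  ∀ S : Finset (Fin n), S.Nonempty →
    0 < (A.submatrix (fun i : S => (i : Fin n)) (fun j : S => (j : Fin n))).det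

/-!
The off-diagonal entries of `Q` are nonpositive, so the P-matrix `Q` is an M-matrix: some `d > 0`
has `Q d > 0`. With the weights `e_ℓ = d_ℓ (σ² + ∑_k a_{ℓk} p_k^max) / (a_{ℓℓ} σ²)` this says that
the channel matrix `a` is strictly row diagonally dominant. Since
`F_i(p) = λ_i − α_i W a_{ii} / (σ² + ∑_ℓ a_{iℓ} p_ℓ)`, the difference `F_i(p) − F_i(p′)` is
`(a (p − p′))_i` times a factor bounded below by `α_i W a_{ii} / (σ² + ∑_ℓ a_{iℓ} p_ℓ^max)²`, and at
the coordinate `i` maximizing `|x_i| / e_i`, for `x = p − p′`, diagonal dominance gives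
`x_i (a x)_i ≥ c ‖x‖²`.
-/

open Matrix

section Determinant

variable {ι R : Type*} [Fintype ι] [DecidableEq ι] [CommRing R]

theorem Matrix.det_piecewise_one (A : Matrix ι ι R) (T : Finset ι) :
    det (of (T.piecewise A (1 : Matrix ι ι R))) = det (A.submatrix ((↑) : T → ι) (↑)) := by
  let e : T ⊕ {i // i ∉ T} ≃ ι := Equiv.sumCompl (· ∈ T)
  have hblocks : (of (T.piecewise A (1 : Matrix ι ι R))).submatrix e e =
      fromBlocks (A.submatrix ((↑) : T → ι) (↑)) (A.submatrix ((↑) : T → ι) (↑)) 0 1 := by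
    ext (i | i) (j | j)
    · simp [e, i.2, Finset.piecewise]
    · simp [e, i.2, Finset.piecewise]
    · have hji : (j : ι) ≠ i := fun h => i.2 (h ▸ j.2)
      simp [e, i.2, Finset.piecewise, hji.symm]
    · simp [e, i.2, Finset.piecewise, one_apply, Subtype.ext_iff]
  rw [← det_submatrix_equiv_self e, hblocks, det_fromBlocks_zero₂₁, det_one, mul_one]

theorem Matrix.det_piecewise_add_diagonal (A : Matrix ι ι R) (d : ι → R) (S : Finset ι) :
    det (of (S.piecewise (A + diagonal d) (diagonal d))) =
      ∑ T ∈ S.powerset, (∏ i ∈ Tᶜ, d i) * det (A.submatrix ((↑) : T → ι) (↑)) := by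
  have hrows : ∀ T : Finset ι, of (T.piecewise A (diagonal d)) =
      diagonal (T.piecewise 1 d) * of (T.piecewise A (1 : Matrix ι ι R)) := by
    intro T
    ext i j
    by_cases hi : i ∈ T <;> simp [diagonal_mul, hi, diagonal_apply, one_apply, Finset.piecewise]
  refine (detRowAlternating.toMultilinearMap.map_piecewise_add A (diagonal d) S).trans ?_
  refine sum_congr rfl fun T _ => ?_
  change det (of (T.piecewise A (diagonal d))) = _
  rw [hrows, det_mul, det_diagonal, det_piecewise_one, prod_piecewise]
  simp [compl_eq_univ_sdiff]

end Determinant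

theorem Matrix.mulVec_apply_nonpos_of_offDiag_nonpos {ι : Type*} [Fintype ι]
    {Q : Matrix ι ι ℝ} (hQ : ∀ i j, i ≠ j → Q i j ≤ 0) {y : ι → ℝ} (hy : ∀ j, 0 ≤ y j)
    {i : ι} (hyi : y i = 0) : (Q *ᵥ y) i ≤ 0 :=
  sum_nonpos fun j _ => by
    rcases eq_or_ne i j with rfl | hij
    · simp [hyi]
    · exact mul_nonpos_of_nonpos_of_nonneg (hQ i j hij) (hy j)

namespace IsPMatrix

variable {n : ℕ} {A : Matrix (Fin n) (Fin n) ℝ}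

theorem det_submatrix_pos (hA : IsPMatrix A) (T : Finset (Fin n)) :
    0 < det (A.submatrix ((↑) : T → Fin n) (↑)) := by
  rcases T.eq_empty_or_nonempty with rfl | hT
  · simp
  · exact hA T hT

theorem det_piecewise_add_diagonal_pos (hA : IsPMatrix A) {d : Fin n → ℝ} (hd : ∀ i, 0 ≤ d i)
    (S : Finset (Fin n)) (hS : ∀ i ∉ S, 0 < d i) :
    0 < det (of (S.piecewise (A + diagonal d) (diagonal d))) := by
  rw [det_piecewise_add_diagonal]
  refine sum_pos' (fun T _ => mul_nonneg (prod_nonneg fun i _ => hd i) (hA.det_submatrix_pos T).le)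
    ⟨S, mem_powerset_self S, mul_pos ?_ (hA.det_submatrix_pos S)⟩
  exact prod_pos fun i hi => hS i (mem_compl.1 hi)

theorem exists_mul_mulVec_pos (hA : IsPMatrix A) {x : Fin n → ℝ} (hx : x ≠ 0) :
    ∃ i, 0 < x i * (A *ᵥ x) i := by
  by_contra! hrev
  let S := univ.filter (x · ≠ 0)
  let d : Fin n → ℝ := fun i => if x i = 0 then 1 else -(A *ᵥ x) i / x i
  have hd : ∀ i, 0 ≤ d i := by
    intro i
    by_cases hxi : x i = 0
    · simp [d, hxi]
    · have : -(A *ᵥ x) i / x i = -(x i * (A *ᵥ x) i) / x i ^ 2 := by field_simp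
      simp only [d, if_neg hxi, this]
      exact div_nonneg (neg_nonneg.2 (hrev i)) (sq_nonneg _)
  have hS : ∀ i ∉ S, 0 < d i := fun i hi => by
    simp [d, show x i = 0 by simpa [S] using hi]
  have hker : of (S.piecewise (A + diagonal d) (diagonal d)) *ᵥ x = 0 := by
    funext i
    change (if i ∈ S then (A + diagonal d) i else diagonal d i) ⬝ᵥ x = 0
    by_cases hxi : x i = 0
    · rw [if_neg (by simpa [S] using hxi)]
      change (diagonal d *ᵥ x) i = 0
      simp [mulVec_diagonal, hxi]
    · rw [if_pos (by simpa [S] using hxi)]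
      change ((A + diagonal d) *ᵥ x) i = 0
      simp [add_mulVec, mulVec_diagonal, d, hxi]
  exact hx (eq_zero_of_mulVec_eq_zero (hA.det_piecewise_add_diagonal_pos hd S hS).ne' hker)

/-- A P-matrix with nonpositive off-diagonal entries is a nonsingular M-matrix. -/
theorem exists_pos_mulVec_pos (hA : IsPMatrix A) (hZ : ∀ i j, i ≠ j → A i j ≤ 0) :
    ∃ d : Fin n → ℝ, (∀ i, 0 < d i) ∧ ∀ i, 0 < (A *ᵥ d) i := by
  have hdet : IsUnit A.det := by
    refine isUnit_iff_ne_zero.2 fun h0 => ?_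
    obtain ⟨v, hv, hAv⟩ := exists_mulVec_eq_zero_iff.2 h0
    obtain ⟨i, hi⟩ := hA.exists_mul_mulVec_pos hv
    simp [hAv] at hi
  set d := A⁻¹ *ᵥ 1
  have hAd : A *ᵥ d = 1 := by rw [mulVec_mulVec, mul_nonsing_inv _ hdet, one_mulVec]
  have hd : ∀ i, 0 ≤ d i := by
    by_contra! ⟨j, hj⟩
    let y := fun i => max (d i) 0
    have hy : ∀ i, 0 ≤ y i := fun i => le_max_right _ _
    -- `A (d - y) = 1 - A y ≥ 1` where `d < 0`, so the negative part `d - y` of `d` reverses signs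
    obtain ⟨i, hi⟩ := hA.exists_mul_mulVec_pos (x := d - y) fun h => by
      have := congrFun h j
      simp [y, hj.le] at this
      linarith
    have hdi : d i < 0 := by
      by_contra! hdi
      simp [y, hdi] at hi
    have hAy := mulVec_apply_nonpos_of_offDiag_nonpos hZ hy (i := i) (by simp [y, hdi.le])
    have hAx : (A *ᵥ (d - y)) i = 1 - (A *ᵥ y) i := by simp [mulVec_sub, hAd]
    have hxi : (d - y) i = d i := by simp [y, hdi.le]
    rw [hAx, hxi] at hi
    nlinarith
  refine ⟨d, fun i => (hd i).lt_of_ne fun hdi => ?_, fun i => by simp [hAd]⟩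
  have := mulVec_apply_nonpos_of_offDiag_nonpos hZ hd hdi.symm
  norm_num [hAd] at this

end IsPMatrix

section DiagonalDominance

variable {ι : Type*} [Fintype ι] [DecidableEq ι] {A : Matrix ι ι ℝ} {e : ι → ℝ}

theorem Matrix.sq_mul_le_mul_mulVec_apply {x : ι → ℝ} {t : ℝ} (hle : ∀ j, |x j| ≤ t * e j)
    {i : ι} (hi : |x i| = t * e i) :
    t ^ 2 * (e i * (A i i * e i - ∑ j ∈ univ.erase i, |A i j| * e j)) ≤ x i * (A *ᵥ x) i := by
  have hoff : |∑ j ∈ univ.erase i, A i j * x j| ≤ t * ∑ j ∈ univ.erase i, |A i j| * e j :=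
    calc |∑ j ∈ univ.erase i, A i j * x j|
        ≤ ∑ j ∈ univ.erase i, |A i j| * |x j| :=
          (abs_sum_le_sum_abs _ _).trans_eq (sum_congr rfl fun j _ => abs_mul _ _)
      _ ≤ ∑ j ∈ univ.erase i, |A i j| * (t * e j) :=
          sum_le_sum fun j _ => mul_le_mul_of_nonneg_left (hle j) (abs_nonneg _)
      _ = t * ∑ j ∈ univ.erase i, |A i j| * e j := by
          rw [mul_sum]; exact sum_congr rfl fun j _ => by ring
  have hcross : -(|x i| * (t * ∑ j ∈ univ.erase i, |A i j| * e j)) ≤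
      x i * ∑ j ∈ univ.erase i, A i j * x j := by
    have := mul_le_mul_of_nonneg_left hoff (abs_nonneg (x i))
    rw [← abs_mul] at this
    linarith [neg_abs_le (x i * ∑ j ∈ univ.erase i, A i j * x j)]
  have hdiag : x i * (A i i * x i) = A i i * (t * e i) ^ 2 := by
    rw [← hi, sq_abs]; ring
  have hsplit : (A *ᵥ x) i = A i i * x i + ∑ j ∈ univ.erase i, A i j * x j :=
    (add_sum_erase _ _ (mem_univ i)).symm
  rw [hsplit, mul_add, hdiag]
  rw [hi] at hcross
  calc t ^ 2 * (e i * (A i i * e i - ∑ j ∈ univ.erase i, |A i j| * e j))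
      = A i i * (t * e i) ^ 2 - t * e i * (t * ∑ j ∈ univ.erase i, |A i j| * e j) := by ring
    _ ≤ _ := by linarith

theorem Matrix.exists_le_mul_mulVec_of_diagDominant [Nonempty ι] (he : ∀ i, 0 < e i)
    (hdom : ∀ i, ∑ j ∈ univ.erase i, |A i j| * e j < A i i * e i) :
    ∃ c > 0, ∀ x : ι → ℝ, ∃ i, c * ∑ j, x j ^ 2 ≤ x i * (A *ᵥ x) i := by
  obtain ⟨i₀, hi₀⟩ :=
    Finite.exists_min fun i => e i * (A i i * e i - ∑ j ∈ univ.erase i, |A i j| * e j)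
  set m := e i₀ * (A i₀ i₀ * e i₀ - ∑ j ∈ univ.erase i₀, |A i₀ j| * e j)
  have hm : 0 < m := mul_pos (he i₀) (sub_pos.2 (hdom i₀))
  have hE : 0 < ∑ j, e j ^ 2 := sum_pos (fun j _ => pow_pos (he j) 2) univ_nonempty
  refine ⟨m / ∑ j, e j ^ 2, div_pos hm hE, fun x => ?_⟩
  obtain ⟨i, hi⟩ := Finite.exists_max fun j => |x j| / e j
  set t := |x i| / e i
  have hle : ∀ j, |x j| ≤ t * e j := fun j => (div_le_iff₀ (he j)).1 (hi j)
  have hsq : ∑ j, x j ^ 2 ≤ t ^ 2 * ∑ j, e j ^ 2 := by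
    rw [mul_sum]
    refine sum_le_sum fun j _ => ?_
    rw [← sq_abs, ← mul_pow]
    exact pow_le_pow_left₀ (abs_nonneg _) (hle j) 2
  refine ⟨i, ?_⟩
  calc m / (∑ j, e j ^ 2) * ∑ j, x j ^ 2 ≤ m / (∑ j, e j ^ 2) * (t ^ 2 * ∑ j, e j ^ 2) :=
        mul_le_mul_of_nonneg_left hsq (div_pos hm hE).le
    _ = t ^ 2 * m := by field_simp
    _ ≤ t ^ 2 * (e i * (A i i * e i - ∑ j ∈ univ.erase i, |A i j| * e j)) :=
        mul_le_mul_of_nonneg_left (hi₀ i) (sq_nonneg t)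
    _ ≤ x i * (A *ᵥ x) i := sq_mul_le_mul_mulVec_apply hle (div_mul_cancel₀ _ (he i).ne').symm

end DiagonalDominance

section PowerGame

variable {M : ℕ} {W σ2 : ℝ} {α lam pmax : Fin M → ℝ} {a : Fin M → Fin M → ℝ}

def rxPower (σ2 : ℝ) (a : Fin M → Fin M → ℝ) (p : Fin M → ℝ) (i : Fin M) : ℝ :=
  σ2 + ∑ ℓ, a i ℓ * p ℓ

theorem pmax_mem_stratBox (hpmax : ∀ i, 0 ≤ pmax i) : pmax ∈ stratBox M pmax :=
  fun i => ⟨hpmax i, le_rfl⟩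

theorem rxPower_sub_rxPower (p p' : Fin M → ℝ) (i : Fin M) :
    rxPower σ2 a p i - rxPower σ2 a p' i = (a *ᵥ (p - p')) i := by
  simp only [rxPower, mulVec, dotProduct, Pi.sub_apply, mul_sub, sum_sub_distrib]
  ring

theorem le_rxPower (ha : ∀ i ℓ, 0 ≤ a i ℓ) {p : Fin M → ℝ} (hp : p ∈ stratBox M pmax)
    (i : Fin M) : σ2 ≤ rxPower σ2 a p i :=
  le_add_of_nonneg_right (sum_nonneg fun ℓ _ => mul_nonneg (ha i ℓ) (hp ℓ).1)

theorem rxPower_le_rxPower_pmax (ha : ∀ i ℓ, 0 ≤ a i ℓ) {p : Fin M → ℝ}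
    (hp : p ∈ stratBox M pmax) (i : Fin M) : rxPower σ2 a p i ≤ rxPower σ2 a pmax i :=
  add_le_add_right (sum_le_sum fun ℓ _ => mul_le_mul_of_nonneg_left (hp ℓ).2 (ha i ℓ)) σ2

theorem Fmap_eq (hσ2 : 0 < σ2) (ha : ∀ i ℓ, 0 ≤ a i ℓ) {p : Fin M → ℝ}
    (hp : p ∈ stratBox M pmax) (i : Fin M) :
    Fmap M W σ2 α lam a p i = lam i - α i * W * a i i / rxPower σ2 a p i := by
  have hrx_pos : 0 < rxPower σ2 a p i := hσ2.trans_le (le_rxPower ha hp i)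
  rw [Fmap, gain]
  set s := ∑ ℓ ∈ univ.erase i, a i ℓ * p ℓ
  have hs : 0 < s + σ2 :=
    add_pos_of_nonneg_of_pos (sum_nonneg fun ℓ _ => mul_nonneg (ha i ℓ) (hp ℓ).1) hσ2
  have hrx : rxPower σ2 a p i = s + σ2 + a i i * p i := by
    rw [rxPower, ← add_sum_erase _ _ (mem_univ i)]; ring
  rw [hrx] at hrx_pos ⊢
  field_simp

theorem Fmap_sub_Fmap (hσ2 : 0 < σ2) (ha : ∀ i ℓ, 0 ≤ a i ℓ) {p p' : Fin M → ℝ}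
    (hp : p ∈ stratBox M pmax) (hp' : p' ∈ stratBox M pmax) (i : Fin M) :
    Fmap M W σ2 α lam a p i - Fmap M W σ2 α lam a p' i =
      α i * W * a i i / (rxPower σ2 a p i * rxPower σ2 a p' i) * (a *ᵥ (p - p')) i := by
  have hD := hσ2.trans_le (le_rxPower ha hp i)
  have hD' := hσ2.trans_le (le_rxPower ha hp' i)
  rw [Fmap_eq hσ2 ha hp, Fmap_eq hσ2 ha hp', ← rxPower_sub_rxPower]
  field_simp
  ring

theorem le_mul_Fmap_sub_Fmap (hσ2 : 0 < σ2) (hW : 0 < W) (hα : ∀ i, 0 < α i)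
    (ha : ∀ i ℓ, 0 ≤ a i ℓ) (haii : ∀ i, 0 < a i i) {p p' : Fin M → ℝ}
    (hp : p ∈ stratBox M pmax) (hp' : p' ∈ stratBox M pmax) {i : Fin M}
    (hi : 0 ≤ (p i - p' i) * (a *ᵥ (p - p')) i) :
    α i * W * a i i / rxPower σ2 a pmax i ^ 2 * ((p i - p' i) * (a *ᵥ (p - p')) i) ≤
      (p i - p' i) * (Fmap M W σ2 α lam a p i - Fmap M W σ2 α lam a p' i) := by
  have hD := hσ2.trans_le (le_rxPower ha hp i)
  have hD' := hσ2.trans_le (le_rxPower ha hp' i)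
  have hprod : rxPower σ2 a p i * rxPower σ2 a p' i ≤ rxPower σ2 a pmax i ^ 2 := by
    rw [sq]
    exact mul_le_mul (rxPower_le_rxPower_pmax ha hp i) (rxPower_le_rxPower_pmax ha hp' i)
      hD'.le (hD.trans_le (rxPower_le_rxPower_pmax ha hp i)).le
  have hcoef : α i * W * a i i / rxPower σ2 a pmax i ^ 2 ≤
      α i * W * a i i / (rxPower σ2 a p i * rxPower σ2 a p' i) :=
    div_le_div_of_nonneg_left (by have := hα i; have := haii i; positivity)
      (mul_pos hD hD') hprod
  rw [Fmap_sub_Fmap hσ2 ha hp hp', mul_left_comm (p i - p' i)]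
  exact mul_le_mul_of_nonneg_right hcoef hi

theorem Qmat_apply_nonpos_of_ne (hσ2 : 0 ≤ σ2) (hW : 0 ≤ W) (hα : ∀ i, 0 ≤ α i)
    (hpmax : ∀ i, 0 ≤ pmax i) (ha : ∀ i ℓ, 0 ≤ a i ℓ) {i j : Fin M} (hij : i ≠ j) :
    Qmat M W σ2 α pmax a i j ≤ 0 := by
  have hsum : 0 ≤ ∑ k, a j k * pmax k := sum_nonneg fun k _ => mul_nonneg (ha j k) (hpmax k)
  have := hα i; have := ha i j; have := ha j j
  rw [Qmat, if_neg hij, neg_nonpos]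
  positivity

theorem Qmat_mulVec_apply (hσ2 : 0 < σ2) (haii : ∀ i, 0 < a i i) (d : Fin M → ℝ) (i : Fin M) :
    (Qmat M W σ2 α pmax a *ᵥ d) i = α i * W *
      (d i - ∑ ℓ ∈ univ.erase i, a i ℓ * (d ℓ * rxPower σ2 a pmax ℓ / (a ℓ ℓ * σ2))) := by
  rw [mulVec, dotProduct, ← add_sum_erase _ _ (mem_univ i), mul_sub, mul_sum, sub_eq_add_neg,
    ← sum_neg_distrib, Qmat, if_pos rfl]
  congr 1
  refine sum_congr rfl fun ℓ hℓ => ?_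
  have := haii ℓ
  rw [Qmat, if_neg (ne_of_mem_erase hℓ).symm, rxPower]
  field_simp

theorem exists_diagDominant_of_isPMatrix_Qmat (hσ2 : 0 < σ2) (hW : 0 < W) (hα : ∀ i, 0 < α i)
    (hpmax : ∀ i, 0 ≤ pmax i) (ha : ∀ i ℓ, 0 ≤ a i ℓ) (haii : ∀ i, 0 < a i i)
    (hQ : IsPMatrix (Qmat M W σ2 α pmax a)) :
    ∃ e : Fin M → ℝ, (∀ i, 0 < e i) ∧ ∀ i, ∑ ℓ ∈ univ.erase i, |a i ℓ| * e ℓ < a i i * e i := by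
  obtain ⟨d, hd, hQd⟩ :=
    hQ.exists_pos_mulVec_pos fun i j =>
      Qmat_apply_nonpos_of_ne hσ2.le hW.le (fun i => (hα i).le) hpmax ha
  have hrx : ∀ i, σ2 ≤ rxPower σ2 a pmax i := le_rxPower ha (pmax_mem_stratBox hpmax)
  refine ⟨fun ℓ => d ℓ * rxPower σ2 a pmax ℓ / (a ℓ ℓ * σ2), fun ℓ => ?_, fun i => ?_⟩
  · have := hd ℓ; have := haii ℓ; have := hσ2.trans_le (hrx ℓ)
    positivity
  · have hoff := hQd i
    rw [Qmat_mulVec_apply hσ2 haii] at hoff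
    have hdiag : d i ≤ a i i * (d i * rxPower σ2 a pmax i / (a i i * σ2)) := by
      rw [mul_div_assoc', mul_div_mul_left _ _ (haii i).ne', le_div_iff₀ hσ2]
      exact mul_le_mul_of_nonneg_left (hrx i) (hd i).le
    simp only [abs_of_nonneg (ha i _)]
    nlinarith [mul_pos (hα i) hW]

end PowerGame

theorem Fmap_uniformlyPFunction_of_isPMatrix_general (M : ℕ) (hM : 1 ≤ M) (W σ2 : ℝ)
    (hW : 0 < W) (hσ2 : 0 < σ2) (α lam pmax : Fin M → ℝ)
    (a : Fin M → Fin M → ℝ)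
    (hα : ∀ i, 0 < α i) (hpmax : ∀ i, 0 < pmax i)
    (ha : ∀ i ℓ, 0 ≤ a i ℓ) (haii : ∀ i, 0 < a i i)
    (hQ : IsPMatrix (Qmat M W σ2 α pmax a)) :
    ∃ C > (0 : ℝ), ∀ p ∈ stratBox M pmax, ∀ p' ∈ stratBox M pmax,
      Finset.univ.sup' (Finset.univ_nonempty_iff.mpr ⟨⟨0, hM⟩⟩)
          (fun i => (p i - p' i) * (Fmap M W σ2 α lam a p i - Fmap M W σ2 α lam a p' i))
        ≥ C * ∑ i, (p i - p' i) ^ 2 := by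
  have : Nonempty (Fin M) := ⟨⟨0, hM⟩⟩
  have hpmax₀ : ∀ i, 0 ≤ pmax i := fun i => (hpmax i).le
  obtain ⟨e, he, hdom⟩ := exists_diagDominant_of_isPMatrix_Qmat hσ2 hW hα hpmax₀ ha haii hQ
  obtain ⟨c, hc, hcoer⟩ := exists_le_mul_mulVec_of_diagDominant he hdom
  let κ i := α i * W * a i i / rxPower σ2 a pmax i ^ 2
  obtain ⟨i₀, hi₀⟩ := Finite.exists_min κ
  have hκ : 0 < κ i₀ := by
    have := hα i₀; have := haii i₀
    have := hσ2.trans_le (le_rxPower ha (pmax_mem_stratBox hpmax₀) i₀)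
    positivity
  refine ⟨κ i₀ * c, mul_pos hκ hc, fun p hp p' hp' => ?_⟩
  obtain ⟨i, hi⟩ := hcoer (p - p')
  have hi_nonneg : 0 ≤ (p i - p' i) * (a *ᵥ (p - p')) i :=
    (mul_nonneg hc.le (sum_nonneg fun j _ => sq_nonneg _)).trans hi
  calc κ i₀ * c * ∑ j, (p j - p' j) ^ 2 ≤ κ i * ((p i - p' i) * (a *ᵥ (p - p')) i) := by
        rw [mul_assoc]
        exact mul_le_mul (hi₀ i) hi (mul_nonneg hc.le (sum_nonneg fun j _ => sq_nonneg _))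
          (hκ.trans_le (hi₀ i)).le
    _ ≤ (p i - p' i) * (Fmap M W σ2 α lam a p i - Fmap M W σ2 α lam a p' i) :=
        le_mul_Fmap_sub_Fmap hσ2 hW hα ha haii hp hp' hi_nonneg
    _ ≤ _ := le_sup' (fun j => (p j - p' j) *
        (Fmap M W σ2 α lam a p j - Fmap M W σ2 α lam a p' j)) (mem_univ i)

/-- **Theorem 1, main assertion.** If the matrix `Q` is a P-matrix,
then `F` is a uniformly P-function on `P`: there is `C > 0` such that for all
`p, p' ∈ P`, `max_{1≤i≤M} (p_i − p'_i)·(F_i(p) − F_i(p')) ≥ C·∑_i (p_i − p'_i)²`. -/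
theorem Fmap_uniformlyPFunction_of_isPMatrix (M : ℕ) (hM : 1 ≤ M) (W σ2 : ℝ)
    (hW : 0 < W) (hσ2 : 0 < σ2) (α lam pmax : Fin M → ℝ)
    (a : Fin M → Fin M → ℝ)
    (hα : ∀ i, 0 < α i) (hlam : ∀ i, 0 ≤ lam i) (hpmax : ∀ i, 0 < pmax i)
    (ha : ∀ i ℓ, 0 ≤ a i ℓ) (haii : ∀ i, 0 < a i i)
    (hQ : IsPMatrix (Qmat M W σ2 α pmax a)) :
    ∃ C > (0 : ℝ), ∀ p ∈ stratBox M pmax, ∀ p' ∈ stratBox M pmax,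
      Finset.univ.sup' (Finset.univ_nonempty_iff.mpr ⟨⟨0, hM⟩⟩)
          (fun i => (p i - p' i) * (Fmap M W σ2 α lam a p i - Fmap M W σ2 α lam a p' i))
        ≥ C * ∑ i, (p i - p' i) ^ 2 :=
  Fmap_uniformlyPFunction_of_isPMatrix_general M hM W σ2 hW hσ2 α lam pmax a hα hpmax ha haii hQ
end

section
/- In the power allocation game with α_i > 0 for all i, define F_i(p) = λ_i − α_i·W·g_i(p)/(1 + g_i(p)·p_i), the normalized coefficients â_{i,ℓ} = a_{i,ℓ}/a_{i,i} and σ̂_i² = σ²/a_{i,i}, and for two profiles p, p′ ∈ P set ψ_i = sqrt(∑_{ℓ=1}^M â_{i,ℓ}·p′_ℓ + σ̂_i²)·sqrt(∑_{ℓ=1}^M â_{i,ℓ}·p_ℓ + σ̂_i²) and e_i = (p_i − p′_i)/ψ_i. Define the M×M matrix Q by Q_{p,p} = α_p·W and, for p ≠ q, Q_{p,q} = −α_p·W·(a_{p,q}/a_{q,q})·(1 + σ^{−2}·∑_{i=1}^M a_{q,i}·p_i^max). Then for every i ∈ {1,…,M} and all p, p′ ∈ P, (p_i − p′_i)·(F_i(p)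 − F_i(p′)) ≥ |e_i| · ∑_{i′=1}^M Q_{i,i′}·|e_{i′}|. -/
open Finset

/-- `ψ_i = sqrt(∑_ℓ â_{i,ℓ}·p'_ℓ + σ̂_i²) · sqrt(∑_ℓ â_{i,ℓ}·p_ℓ + σ̂_i²)`
where `â_{i,ℓ} = a_{i,ℓ}/a_{i,i}` and `σ̂_i² = σ²/a_{i,i}`. -/
noncomputable def psi (M : ℕ) (σ2 : ℝ) (a : Fin M → Fin M → ℝ)
    (p p' : Fin M → ℝ) (i : Fin M) : ℝ :=
  Real.sqrt ((∑ ℓ, (a i ℓ / a i i) * p' ℓ) + σ2 / a i i) *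
    Real.sqrt ((∑ ℓ, (a i ℓ / a i i) * p ℓ) + σ2 / a i i)

/-- `e_i = (p_i − p'_i)/ψ_i`. -/
noncomputable def evec (M : ℕ) (σ2 : ℝ) (a : Fin M → Fin M → ℝ)
    (p p' : Fin M → ℝ) (i : Fin M) : ℝ :=
  (p i - p' i) / psi M σ2 a p p' i

/-!
Dividing numerator and denominator by `a_{i,i}` shows `g_i(q)/(1 + g_i(q)·q_i) = 1/L_i(q)` with
`L_i(q) = ∑_ℓ â_{i,ℓ}·q_ℓ + σ̂_i²` (`load`), and `ψ_i² = L_i(p)·L_i(p′)`. Hence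
`(p_i − p′_i)(F_i(p) − F_i(p′)) = α_i W ∑_ℓ â_{i,ℓ} (ψ_ℓ/ψ_i) e_i e_ℓ`. The diagonal term is
`α_i W e_i²`; off the diagonal, `σ̂_i² ≤ ψ_i` and `ψ_ℓ ≤ (∑_k a_{ℓ,k} p_k^max + σ²)/a_{ℓ,ℓ}`
bound `â_{i,ℓ} ψ_ℓ/ψ_i` by `|Q_{i,ℓ}|/(α_i W)`.
-/

theorem div_div_one_add_div_mul {a d x : ℝ} (hd : d ≠ 0) :
    a / d / (1 + a / d * x) = a / (d + a * x) := by
  rw [div_mul_eq_mul_div, one_add_div hd, div_div_div_cancel_right₀ hd]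

theorem le_sqrt_mul_sqrt {c x y : ℝ} (hc : 0 ≤ c) (hx : c ≤ x) (hy : c ≤ y) :
    c ≤ √x * √y :=
  calc c = √c * √c := (Real.mul_self_sqrt hc).symm
    _ ≤ √x * √y := by gcongr

theorem sqrt_mul_sqrt_le {c x y : ℝ} (hc : 0 ≤ c) (hx : x ≤ c) (hy : y ≤ c) :
    √x * √y ≤ c :=
  calc √x * √y ≤ √c * √c := by gcongr
    _ = c := Real.mul_self_sqrt hc

theorem neg_mul_abs_le_mul {k K x : ℝ} (hk : 0 ≤ k) (hkK : k ≤ K) : -(K * |x|) ≤ k * x := by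
  nlinarith [neg_abs_le x, abs_nonneg x]

section PowerGame

variable {M : ℕ} {σ2 : ℝ} {a : Fin M → Fin M → ℝ}

noncomputable def load (σ2 : ℝ) (a : Fin M → Fin M → ℝ) (q : Fin M → ℝ) (i : Fin M) : ℝ :=
  (∑ ℓ, (a i ℓ / a i i) * q ℓ) + σ2 / a i i

theorem psi_eq_sqrt_mul_sqrt (p p' : Fin M → ℝ) (i : Fin M) :
    psi M σ2 a p p' i = √(load σ2 a p' i) * √(load σ2 a p i) := rfl

theorem load_eq_sum_div (q : Fin M → ℝ) (i : Fin M) :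
    load σ2 a q i = (∑ ℓ, a i ℓ * q ℓ + σ2) / a i i := by
  simp only [load, add_div, Finset.sum_div, div_mul_eq_mul_div]

theorem load_sub_load (q q' : Fin M → ℝ) (i : Fin M) :
    load σ2 a q i - load σ2 a q' i = ∑ ℓ, a i ℓ / a i i * (q ℓ - q' ℓ) := by
  simp only [load, add_sub_add_right_eq_sub, ← Finset.sum_sub_distrib, mul_sub]

theorem Fmap_eq_sub_div_load {W : ℝ} {α lam q : Fin M → ℝ} {i : Fin M}
    (hd : ∑ ℓ ∈ univ.erase i, a i ℓ * q ℓ + σ2 ≠ 0) :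
    Fmap M W σ2 α lam a q i = lam i - α i * W / load σ2 a q i := by
  rw [Fmap, gain, mul_div_assoc, div_div_one_add_div_mul hd, load_eq_sum_div,
    ← sum_erase_add _ _ (mem_univ i), add_right_comm, div_div_eq_mul_div, mul_div_assoc]

theorem Fmap_eq_sub_div_load_of_nonneg {W : ℝ} {α lam q : Fin M → ℝ} (hσ2 : 0 < σ2)
    (ha : ∀ i ℓ, 0 ≤ a i ℓ) (hq : ∀ ℓ, 0 ≤ q ℓ) (i : Fin M) :
    Fmap M W σ2 α lam a q i = lam i - α i * W / load σ2 a q i :=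
  Fmap_eq_sub_div_load <| ne_of_gt <| add_pos_of_nonneg_of_pos
    (sum_nonneg fun ℓ _ => mul_nonneg (ha i ℓ) (hq ℓ)) hσ2

variable {i : Fin M}

theorem div_le_load {q : Fin M → ℝ} (ha : ∀ ℓ, 0 ≤ a i ℓ) (haii : 0 ≤ a i i)
    (hq : ∀ ℓ, 0 ≤ q ℓ) : σ2 / a i i ≤ load σ2 a q i :=
  le_add_of_nonneg_left <| sum_nonneg fun ℓ _ => mul_nonneg (div_nonneg (ha ℓ) haii) (hq ℓ)

theorem load_le {q pmax : Fin M → ℝ} (ha : ∀ ℓ, 0 ≤ a i ℓ) (haii : 0 ≤ a i i)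
    (hq : ∀ ℓ, q ℓ ≤ pmax ℓ) : load σ2 a q i ≤ (∑ k, a i k * pmax k + σ2) / a i i := by
  rw [load_eq_sum_div]
  gcongr with ℓ
  exacts [ha ℓ, hq ℓ]

variable {p p' : Fin M → ℝ}

theorem div_le_psi (hσ2 : 0 ≤ σ2) (ha : ∀ ℓ, 0 ≤ a i ℓ) (haii : 0 ≤ a i i)
    (hp : ∀ ℓ, 0 ≤ p ℓ) (hp' : ∀ ℓ, 0 ≤ p' ℓ) : σ2 / a i i ≤ psi M σ2 a p p' i :=
  le_sqrt_mul_sqrt (div_nonneg hσ2 haii) (div_le_load ha haii hp') (div_le_load ha haii hp)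

theorem psi_pos (hσ2 : 0 < σ2) (ha : ∀ ℓ, 0 ≤ a i ℓ) (haii : 0 < a i i)
    (hp : ∀ ℓ, 0 ≤ p ℓ) (hp' : ∀ ℓ, 0 ≤ p' ℓ) : 0 < psi M σ2 a p p' i :=
  (div_pos hσ2 haii).trans_le (div_le_psi hσ2.le ha haii.le hp hp')

theorem psi_le {pmax : Fin M → ℝ} (hσ2 : 0 ≤ σ2) (ha : ∀ ℓ, 0 ≤ a i ℓ) (haii : 0 ≤ a i i)
    (hp : p ∈ stratBox M pmax) (hp' : p' ∈ stratBox M pmax) :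
    psi M σ2 a p p' i ≤ (∑ k, a i k * pmax k + σ2) / a i i := by
  have hpmax : ∀ k, 0 ≤ pmax k := fun k => (hp k).1.trans (hp k).2
  refine sqrt_mul_sqrt_le ?_ (load_le ha haii fun ℓ => (hp' ℓ).2)
    (load_le ha haii fun ℓ => (hp ℓ).2)
  exact div_nonneg (add_nonneg (sum_nonneg fun k _ => mul_nonneg (ha k) (hpmax k)) hσ2) haii

theorem psi_mul_self (hp : 0 ≤ load σ2 a p i) (hp' : 0 ≤ load σ2 a p' i) :
    psi M σ2 a p p' i * psi M σ2 a p p' i = load σ2 a p' i * load σ2 a p i := by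
  rw [psi_eq_sqrt_mul_sqrt, mul_mul_mul_comm, Real.mul_self_sqrt hp', Real.mul_self_sqrt hp]

theorem sub_eq_evec_mul_psi (h : psi M σ2 a p p' i ≠ 0) :
    p i - p' i = evec M σ2 a p p' i * psi M σ2 a p p' i :=
  (div_mul_cancel₀ _ h).symm

variable {W : ℝ} {α : Fin M → ℝ}

theorem sub_mul_Fmap_sub_eq {lam : Fin M → ℝ} (hσ2 : 0 < σ2) (ha : ∀ i ℓ, 0 ≤ a i ℓ)
    (haii : ∀ i, 0 < a i i) (hp : ∀ ℓ, 0 ≤ p ℓ) (hp' : ∀ ℓ, 0 ≤ p' ℓ) (i : Fin M) :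
    (p i - p' i) * (Fmap M W σ2 α lam a p i - Fmap M W σ2 α lam a p' i) =
      ∑ ℓ, α i * W * (a i ℓ / a i i) * (psi M σ2 a p p' ℓ / psi M σ2 a p p' i) *
        (evec M σ2 a p p' i * evec M σ2 a p p' ℓ) := by
  have hψ : ∀ j, psi M σ2 a p p' j ≠ 0 := fun j => (psi_pos hσ2 (ha j) (haii j) hp hp').ne'
  have hL : 0 < load σ2 a p i :=
    (div_pos hσ2 (haii i)).trans_le (div_le_load (ha i) (haii i).le hp)
  have hL' : 0 < load σ2 a p' i :=
    (div_pos hσ2 (haii i)).trans_le (div_le_load (ha i) (haii i).le hp')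
  calc (p i - p' i) * (Fmap M W σ2 α lam a p i - Fmap M W σ2 α lam a p' i)
      = (p i - p' i) * (α i * W) * (load σ2 a p i - load σ2 a p' i) /
          (load σ2 a p' i * load σ2 a p i) := by
        rw [Fmap_eq_sub_div_load_of_nonneg hσ2 ha hp,
          Fmap_eq_sub_div_load_of_nonneg hσ2 ha hp']
        field_simp
        ring
    _ = _ := by
        simp only [load_sub_load, ← psi_mul_self hL.le hL'.le, sub_eq_evec_mul_psi (hψ _),
          mul_sum, sum_div]
        refine sum_congr rfl fun ℓ _ => ?_
        field_simp [hψ i]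

theorem div_mul_psi_div_psi_le {pmax : Fin M → ℝ} (hσ2 : 0 < σ2) (ha : ∀ i ℓ, 0 ≤ a i ℓ)
    (haii : ∀ i, 0 < a i i) (hp : p ∈ stratBox M pmax) (hp' : p' ∈ stratBox M pmax)
    (i ℓ : Fin M) :
    a i ℓ / a i i * (psi M σ2 a p p' ℓ / psi M σ2 a p p' i) ≤
      a i ℓ / a ℓ ℓ * (1 + σ2⁻¹ * ∑ k, a ℓ k * pmax k) := by
  have hp0 : ∀ ℓ, 0 ≤ p ℓ := fun ℓ => (hp ℓ).1
  have hp0' : ∀ ℓ, 0 ≤ p' ℓ := fun ℓ => (hp' ℓ).1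
  have hψℓ : psi M σ2 a p p' ℓ ≤ (∑ k, a ℓ k * pmax k + σ2) / a ℓ ℓ :=
    psi_le hσ2.le (ha ℓ) (haii ℓ).le hp hp'
  calc a i ℓ / a i i * (psi M σ2 a p p' ℓ / psi M σ2 a p p' i)
      ≤ a i ℓ / a i i * ((∑ k, a ℓ k * pmax k + σ2) / a ℓ ℓ / (σ2 / a i i)) := by
        refine mul_le_mul_of_nonneg_left (div_le_div₀ ?_ hψℓ (div_pos hσ2 (haii i))
          (div_le_psi hσ2.le (ha i) (haii i).le hp0 hp0')) (div_nonneg (ha i ℓ) (haii i).le)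
        exact (psi_pos hσ2 (ha ℓ) (haii ℓ) hp0 hp0').le.trans hψℓ
    _ = a i ℓ / a ℓ ℓ * (1 + σ2⁻¹ * ∑ k, a ℓ k * pmax k) := by
        field_simp [(haii i).ne', (haii ℓ).ne', hσ2.ne']
        ring

theorem abs_evec_mul_Qmat_mul_le {pmax : Fin M → ℝ} (hαW : 0 ≤ α i * W)
    (hσ2 : 0 < σ2) (ha : ∀ i ℓ, 0 ≤ a i ℓ) (haii : ∀ i, 0 < a i i)
    (hp : p ∈ stratBox M pmax) (hp' : p' ∈ stratBox M pmax) (ℓ : Fin M) :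
    |evec M σ2 a p p' i| * (Qmat M W σ2 α pmax a i ℓ * |evec M σ2 a p p' ℓ|) ≤
      α i * W * (a i ℓ / a i i) * (psi M σ2 a p p' ℓ / psi M σ2 a p p' i) *
        (evec M σ2 a p p' i * evec M σ2 a p p' ℓ) := by
  have hp0 : ∀ ℓ, 0 ≤ p ℓ := fun ℓ => (hp ℓ).1
  have hp0' : ∀ ℓ, 0 ≤ p' ℓ := fun ℓ => (hp' ℓ).1
  have hψi := psi_pos hσ2 (ha i) (haii i) hp0 hp0'
  rcases eq_or_ne i ℓ with rfl | hne
  · rw [Qmat, if_pos rfl, div_self (haii i).ne', div_self hψi.ne',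
      ← abs_mul_abs_self (evec M σ2 a p p' i)]
    exact le_of_eq (by ring)
  · have hψℓ := psi_pos hσ2 (ha ℓ) (haii ℓ) hp0 hp0'
    have hratio : 0 ≤ a i ℓ / a i i * (psi M σ2 a p p' ℓ / psi M σ2 a p p' i) :=
      mul_nonneg (div_nonneg (ha i ℓ) (haii i).le) (div_nonneg hψℓ.le hψi.le)
    have key := neg_mul_abs_le_mul (x := evec M σ2 a p p' i * evec M σ2 a p p' ℓ)
      (mul_nonneg hαW hratio)
      (mul_le_mul_of_nonneg_left (div_mul_psi_div_psi_le hσ2 ha haii hp hp' i ℓ) hαW)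
    rw [abs_mul] at key
    rw [Qmat, if_neg hne]
    linarith

end PowerGame

theorem Fmap_diff_ge_Qform_general (M : ℕ) (W σ2 : ℝ)
    (hW : 0 < W) (hσ2 : 0 < σ2) (α lam pmax : Fin M → ℝ)
    (a : Fin M → Fin M → ℝ)
    (hα : ∀ i, 0 < α i)
    (ha : ∀ i ℓ, 0 ≤ a i ℓ) (haii : ∀ i, 0 < a i i) :
    ∀ i : Fin M, ∀ p ∈ stratBox M pmax, ∀ p' ∈ stratBox M pmax,
      (p i - p' i) * (Fmap M W σ2 α lam a p i - Fmap M W σ2 α lam a p' i) ≥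
        |evec M σ2 a p p' i| *
          ∑ i', Qmat M W σ2 α pmax a i i' * |evec M σ2 a p p' i'| := by
  intro i p hp p' hp'
  rw [ge_iff_le, sub_mul_Fmap_sub_eq hσ2 ha haii (fun ℓ => (hp ℓ).1) (fun ℓ => (hp' ℓ).1),
    mul_sum]
  exact sum_le_sum fun ℓ _ =>
    abs_evec_mul_Qmat_mul_le (mul_pos (hα i) hW).le hσ2 ha haii hp hp' ℓ

/-- **key inequality chain, Eqs. (35)-(37) in Appendix C.**
For every `i` and all `p, p' ∈ P`,
`(p_i − p'_i)·(F_i(p) − F_i(p')) ≥ |e_i|·∑_{i'} Q_{i,i'}·|e_{i'}|`. -/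
theorem Fmap_diff_ge_Qform (M : ℕ) (hM : 1 ≤ M) (W σ2 : ℝ)
    (hW : 0 < W) (hσ2 : 0 < σ2) (α lam pmax : Fin M → ℝ)
    (a : Fin M → Fin M → ℝ)
    (hα : ∀ i, 0 < α i) (hlam : ∀ i, 0 ≤ lam i) (hpmax : ∀ i, 0 < pmax i)
    (ha : ∀ i ℓ, 0 ≤ a i ℓ) (haii : ∀ i, 0 < a i i) :
    ∀ i : Fin M, ∀ p ∈ stratBox M pmax, ∀ p' ∈ stratBox M pmax,
      (p i - p' i) * (Fmap M W σ2 α lam a p i - Fmap M W σ2 α lam a p' i) ≥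
        |evec M σ2 a p p' i| *
          ∑ i', Qmat M W σ2 α pmax a i i' * |evec M σ2 a p p' i'| :=
  Fmap_diff_ge_Qform_general M W σ2 hW hσ2 α lam pmax a hα ha haii
end

section
/- In the power allocation game, define the normalized coefficients â_{i,ℓ} = a_{i,ℓ}/a_{i,i} and σ̂_i² = σ²/a_{i,i}, and for two profiles p, p′ ∈ P set ψ_i = sqrt(∑_{ℓ=1}^M â_{i,ℓ}·p′_ℓ + σ̂_i²)·sqrt(∑_{ℓ=1}^M â_{i,ℓ}·p_ℓ + σ̂_i²). Define the M×M matrix Q by Q_{p,p} = α_p·W and, for p ≠ q, Q_{p,q} = −α_p·W·(a_{p,q}/a_{q,q})·(1 + σ^{−2}·∑_{i=1}^M a_{q,i}·p_i^max). Then for all indices i ≠ i′ in {1,…,M} and all p, p′ ∈ P, Q_{i,i′} ≤ −α_i·W·â_{i,i′}·ψ_{i′}/ψ_i. -/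
/-- **intermediate bound, Eq. (38) in Appendix C.** For all indices
`i ≠ i'` and all profiles `p, p' ∈ P`, `Q_{i,i'} ≤ −α_i·W·â_{i,i'}·ψ_{i'}/ψ_i`. -/
theorem Qmat_le_psi_ratio_bound (M : ℕ) (hM : 1 ≤ M) (W σ2 : ℝ)
    (hW : 0 < W) (hσ2 : 0 < σ2) (α pmax : Fin M → ℝ)
    (a : Fin M → Fin M → ℝ)
    (hα : ∀ i, 0 ≤ α i) (hpmax : ∀ i, 0 < pmax i)
    (ha : ∀ i ℓ, 0 ≤ a i ℓ) (haii : ∀ i, 0 < a i i) :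
    ∀ i i' : Fin M, i ≠ i' → ∀ p ∈ stratBox M pmax, ∀ p' ∈ stratBox M pmax,
      Qmat M W σ2 α pmax a i i' ≤
        -(α i * W * (a i i' / a i i) * psi M σ2 a p p' i' / psi M σ2 a p p' i) := by
  intro i i' hii p hp p' hp'
  have hai := haii i
  have hai' := haii i'
  have hsi : (0:ℝ) < σ2 / a i i := div_pos hσ2 hai
  have hsi' : (0:ℝ) < σ2 / a i' i' := div_pos hσ2 hai'
  -- nonnegativity of the weighted sums
  have sumnn : ∀ (j : Fin M) (q : Fin M → ℝ), q ∈ stratBox M pmax →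
      0 ≤ ∑ ℓ, (a j ℓ / a j j) * q ℓ := by
    intro j q hq
    exact Finset.sum_nonneg fun ℓ _ =>
      mul_nonneg (div_nonneg (ha j ℓ) (haii j).le) (hq ℓ).1
  -- lower bound: σ2/a i i ≤ ψ_i
  have hψi : σ2 / a i i ≤ psi M σ2 a p p' i := by
    have h1 : Real.sqrt (σ2 / a i i) ≤
        Real.sqrt ((∑ ℓ, (a i ℓ / a i i) * p' ℓ) + σ2 / a i i) :=
      Real.sqrt_le_sqrt (by linarith [sumnn i p' hp'])
    have h2 : Real.sqrt (σ2 / a i i) ≤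
        Real.sqrt ((∑ ℓ, (a i ℓ / a i i) * p ℓ) + σ2 / a i i) :=
      Real.sqrt_le_sqrt (by linarith [sumnn i p hp])
    calc σ2 / a i i = Real.sqrt (σ2 / a i i) * Real.sqrt (σ2 / a i i) :=
          (Real.mul_self_sqrt hsi.le).symm
      _ ≤ psi M σ2 a p p' i :=
          mul_le_mul h1 h2 (Real.sqrt_nonneg _) (Real.sqrt_nonneg _)
  have hψi_pos : 0 < psi M σ2 a p p' i := lt_of_lt_of_le hsi hψi
  -- upper bound: ψ_{i'} ≤ T
  set T : ℝ := (∑ ℓ, (a i' ℓ / a i' i') * pmax ℓ) + σ2 / a i' i' with hT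
  have hsum_le : ∀ (q : Fin M → ℝ), q ∈ stratBox M pmax →
      (∑ ℓ, (a i' ℓ / a i' i') * q ℓ) ≤ ∑ ℓ, (a i' ℓ / a i' i') * pmax ℓ := by
    intro q hq
    exact Finset.sum_le_sum fun ℓ _ =>
      mul_le_mul_of_nonneg_left (hq ℓ).2 (div_nonneg (ha i' ℓ) hai'.le)
  have hTnn : 0 ≤ T := by
    have h0 : 0 ≤ ∑ ℓ, (a i' ℓ / a i' i') * pmax ℓ :=
      Finset.sum_nonneg fun ℓ _ =>
        mul_nonneg (div_nonneg (ha i' ℓ) hai'.le) (hpmax ℓ).le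
    rw [hT]; linarith
  have hψi' : psi M σ2 a p p' i' ≤ T := by
    have h1 : Real.sqrt ((∑ ℓ, (a i' ℓ / a i' i') * p' ℓ) + σ2 / a i' i') ≤
        Real.sqrt T := Real.sqrt_le_sqrt (by have := hsum_le p' hp'; linarith)
    have h2 : Real.sqrt ((∑ ℓ, (a i' ℓ / a i' i') * p ℓ) + σ2 / a i' i') ≤
        Real.sqrt T := Real.sqrt_le_sqrt (by have := hsum_le p hp; linarith)
    calc psi M σ2 a p p' i' ≤ Real.sqrt T * Real.sqrt T :=
          mul_le_mul h1 h2 (Real.sqrt_nonneg _) (Real.sqrt_nonneg _)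
      _ = T := Real.mul_self_sqrt hTnn
  have hψi'nn : 0 ≤ psi M σ2 a p p' i' :=
    mul_nonneg (Real.sqrt_nonneg _) (Real.sqrt_nonneg _)
  -- ratio bound
  have hratio : psi M σ2 a p p' i' / psi M σ2 a p p' i ≤ T / (σ2 / a i i) :=
    div_le_div₀ hTnn hψi' hsi hψi
  have hc : 0 ≤ α i * W * (a i i' / a i i) :=
    mul_nonneg (mul_nonneg (hα i) hW.le) (div_nonneg (ha i i') hai.le)
  -- rewrite T
  have hs : (∑ ℓ, (a i' ℓ / a i' i') * pmax ℓ) = (∑ ℓ, a i' ℓ * pmax ℓ) / a i' i' := by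
    rw [Finset.sum_div]
    exact Finset.sum_congr rfl fun ℓ _ => div_mul_eq_mul_div _ _ _
  have hTeq : T = ((∑ ℓ, a i' ℓ * pmax ℓ) + σ2) / a i' i' := by
    rw [hT, hs, add_div]
  have key : α i * W * (a i i' / a i i) * (T / (σ2 / a i i)) =
      α i * W * (a i i' / a i' i') * (1 + σ2⁻¹ * ∑ ℓ, a i' ℓ * pmax ℓ) := by
    rw [hTeq]
    field_simp
    ring
  have hQ : Qmat M W σ2 α pmax a i i' =
      -(α i * W * (a i i' / a i' i') * (1 + σ2⁻¹ * ∑ ℓ, a i' ℓ * pmax ℓ)) := by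
    simp [Qmat, hii]
  rw [hQ, ← key]
  have : α i * W * (a i i' / a i i) * (psi M σ2 a p p' i' / psi M σ2 a p p' i) ≤
      α i * W * (a i i' / a i i) * (T / (σ2 / a i i)) :=
    mul_le_mul_of_nonneg_left hratio hc
  rw [neg_le_neg_iff] at *
  calc α i * W * (a i i' / a i i) * psi M σ2 a p p' i' / psi M σ2 a p p' i
      = α i * W * (a i i' / a i i) * (psi M σ2 a p p' i' / psi M σ2 a p p' i) := by
        rw [mul_div_assoc]
    _ ≤ _ := this
end

section
/- In the power allocation game with α_i > 0 and λ_i > 0 for all i, define the M×M matrix Q by Q_{p,p} = α_p·W and, for p ≠ q, Q_{p,q} = −α_p·W·(a_{p,q}/a_{q,q})·(1 + σ^{−2}·∑_{i=1}^M a_{q,i}·p_i^max), and suppose Q is a P-matrix. Given any initial profile p^{(0)} ∈ P, define the parallel-update sequence by p^{(s+1)}_i = [α_i·W/λ_i − 1/g_i(p^{(s)})]_0^{p_i^max} for every i ∈ {1,…,M} and s ≥ 0. Then the sequence (p^{(s)})_{s≥0} converges, and its limit is the unique Nash equilibrium of the game. -/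
open Finset

/-!
`Q` is a Z-matrix with positive principal minors, i.e. a nonsingular M-matrix, so some `d > 0`
has `Q d > 0` (induction on the size, passing to the Schur complement of a diagonal pivot).
Since `Q_{ij} ≤ -α_i W a_{ij} / a_{jj}` off the diagonal, the weights `w_j = d_j / a_{jj}`
satisfy `B w < w` for the normalized interference matrix `B_{ij} = a_{ij} / a_{ii}` (`i ≠ j`).
The parallel update is a projection of an affine map with linear part `-B`, hence a contraction
for the weighted max norm `max_i |x_i| / w_i`, and Banach's theorem gives a globally attracting
unique fixed point. Each payoff is strictly concave in the player's own power and is maximized on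
`[0, p_i^max]` exactly at the projected update value, so the fixed points are the Nash equilibria.
-/

open Filter Topology NNReal Matrix

theorem exists_pos_forall_pos_add_mul {ι : Type*} [Finite ι] {b : ι → ℝ}
    (hb : ∀ i, 0 < b i) (c : ι → ℝ) : ∃ ε > 0, ∀ i, 0 < b i + c i * ε := by
  have : ∀ᶠ ε in 𝓝[>] (0 : ℝ), ∀ i, 0 < b i + c i * ε := eventually_all.2 fun i =>
    (((continuous_const.add (continuous_const.mul continuous_id)).tendsto' 0 _ (by simp)).mono_left
      nhdsWithin_le_nhds).eventually (lt_mem_nhds (hb i))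
  exact (this.and self_mem_nhdsWithin).exists.imp fun ε h => ⟨h.2, h.1⟩

namespace Matrix

variable {ι : Type*} [DecidableEq ι]

def HasPosPrincipalMinors (A : Matrix ι ι ℝ) : Prop :=
  ∀ S : Finset ι, S.Nonempty → 0 < (A.submatrix ((↑) : S → ι) (↑)).det

theorem HasPosPrincipalMinors.diag_pos {A : Matrix ι ι ℝ} (hA : A.HasPosPrincipalMinors)
    (k : ι) : 0 < A k k := by
  simpa [det_unique] using hA {k} (singleton_nonempty k)

noncomputable def pivotSchur (A : Matrix ι ι ℝ) (k : ι) :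
    Matrix {i // i ≠ k} {i // i ≠ k} ℝ :=
  fun i j => A i j - A i k * A k j / A k k

theorem det_submatrix_insert_pivot {A : Matrix ι ι ℝ} {k : ι} (hk : A k k ≠ 0)
    (S : Finset {i // i ≠ k}) :
    (A.submatrix ((↑) : ↥(insert k (S.map (Function.Embedding.subtype _))) → ι) (↑)).det =
      A k k * ((pivotSchur A k).submatrix ((↑) : S → {i // i ≠ k}) (↑)).det := by
  let e : S ⊕ Unit ≃ ↥(insert k (S.map (Function.Embedding.subtype _))) :=
    { toFun := Sum.elim (fun x => ⟨x.1, mem_insert_of_mem (mem_map_of_mem _ x.2)⟩)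
        (fun _ => ⟨k, mem_insert_self _ _⟩)
      invFun := fun ⟨y, hy⟩ =>
        if h : y = k then .inr () else .inl ⟨⟨y, h⟩, by simpa [h] using hy⟩
      left_inv := by rintro (⟨⟨x, hx⟩, hxS⟩ | _) <;> simp [*]
      right_inv := by rintro ⟨y, hy⟩; by_cases h : y = k <;> simp [h] }
  let D : Matrix Unit Unit ℝ := of fun _ _ => A k k
  have hD : D.det = A k k := det_unique D
  have : Invertible D := D.invertibleOfIsUnitDet (by rw [hD]; exact hk.isUnit)
  have hDinv : ⅟D = of fun _ _ => (A k k)⁻¹ := by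
    have h := congrFun (congrFun (invOf_mul_self D) ()) ()
    simp only [mul_apply, univ_unique, sum_singleton, one_apply_eq, D, of_apply] at h
    ext
    exact eq_inv_of_mul_eq_one_left h
  rw [← det_submatrix_equiv_self e]
  rw [show (A.submatrix _ _).submatrix e e = fromBlocks
      (A.submatrix (fun x : S => x.1.1) (fun y : S => y.1.1))
      (of fun (x : S) (_ : Unit) => A x.1.1 k) (of fun (_ : Unit) (y : S) => A k y.1.1) D by
    ext (x | _) (y | _) <;> rfl]
  rw [det_fromBlocks₂₂, hD, hDinv]
  congr 2
  ext x y
  simp [pivotSchur, mul_apply, div_eq_mul_inv, mul_right_comm]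

theorem HasPosPrincipalMinors.pivotSchur {A : Matrix ι ι ℝ} (hA : A.HasPosPrincipalMinors)
    (k : ι) : (A.pivotSchur k).HasPosPrincipalMinors := fun S _ => by
  have h := hA _ (insert_nonempty k (S.map (Function.Embedding.subtype _)))
  rw [det_submatrix_insert_pivot (hA.diag_pos k).ne'] at h
  exact pos_of_mul_pos_right h (hA.diag_pos k).le

omit [DecidableEq ι] in
theorem pivotSchur_nonpos {A : Matrix ι ι ℝ} (hZ : ∀ i j, i ≠ j → A i j ≤ 0) {k : ι}
    (hk : 0 < A k k) {i j : {i // i ≠ k}} (hij : i ≠ j) : A.pivotSchur k i j ≤ 0 := by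
  have : 0 ≤ A i k * A k j / A k k :=
    div_nonneg (mul_nonneg_of_nonpos_of_nonpos (hZ _ _ i.2) (hZ _ _ (Ne.symm j.2))) hk.le
  show A i j - A i k * A k j / A k k ≤ 0
  linarith [hZ i j (Subtype.coe_injective.ne hij)]

theorem exists_pos_mulVec_pos_of_pivotSchur [Fintype ι] {A : Matrix ι ι ℝ}
    (hZ : ∀ i j, i ≠ j → A i j ≤ 0) {k : ι} (hk : 0 < A k k) {d' : {i // i ≠ k} → ℝ}
    (hd' : ∀ i, 0 < d' i) (hSd' : ∀ i, 0 < (A.pivotSchur k *ᵥ d') i) :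
    ∃ d : ι → ℝ, (∀ i, 0 < d i) ∧ ∀ i, 0 < (A *ᵥ d) i := by
  obtain ⟨ε, hε, hεS⟩ := exists_pos_forall_pos_add_mul hSd' fun i : {i // i ≠ k} => A i k
  set t := ∑ j : {i // i ≠ k}, A k j * d' j
  have ht : t ≤ 0 := sum_nonpos fun j _ =>
    mul_nonpos_of_nonpos_of_nonneg (hZ _ _ (Ne.symm j.2)) (hd' j).le
  -- `d k` is chosen so that row `k` of `A *ᵥ d` equals `A k k * ε`
  let d : ι → ℝ := fun i => if h : i = k then ε - t / A k k else d' ⟨i, h⟩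
  have hdk : d k = ε - t / A k k := dif_pos rfl
  have hd : ∀ j : {i // i ≠ k}, d j = d' j := fun j => dif_neg j.2
  refine ⟨d, fun i => ?_, fun i => ?_⟩
  · by_cases h : i = k
    · rw [h, hdk]
      linarith [div_nonpos_of_nonpos_of_nonneg ht hk.le]
    · simpa [d, h] using hd' ⟨i, h⟩
  · have hrow : ∀ i,
        (A *ᵥ d) i = A i k * (ε - t / A k k) + ∑ j : {i // i ≠ k}, A i j * d' j := by
      intro i
      rw [mulVec, dotProduct, Fintype.sum_eq_add_sum_subtype_ne _ k, hdk]
      simp only [hd]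
    by_cases h : i = k
    · rw [h, hrow k, show A k k * (ε - t / A k k) + t = A k k * ε by field_simp; ring]
      positivity
    · have hS : (A.pivotSchur k *ᵥ d') ⟨i, h⟩ =
          ∑ j : {i // i ≠ k}, A i j * d' j - A i k / A k k * t := by
        simp only [mulVec, dotProduct, pivotSchur, t, mul_sum, ← sum_sub_distrib]
        exact sum_congr rfl fun j _ => by ring
      have hrow_i : (A *ᵥ d) i = (A.pivotSchur k *ᵥ d') ⟨i, h⟩ + A i k * ε := by
        rw [hrow, hS]
        field_simp
        ring
      exact hrow_i ▸ hεS ⟨i, h⟩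

theorem exists_pos_mulVec_pos_of_hasPosPrincipalMinors [Fintype ι] {A : Matrix ι ι ℝ}
    (hZ : ∀ i j, i ≠ j → A i j ≤ 0) (hA : A.HasPosPrincipalMinors) :
    ∃ d : ι → ℝ, (∀ i, 0 < d i) ∧ ∀ i, 0 < (A *ᵥ d) i := by
  induction hn : Fintype.card ι generalizing ι with
  | zero =>
    have := Fintype.card_eq_zero_iff.mp hn
    exact ⟨0, isEmptyElim, isEmptyElim⟩
  | succ n ih =>
    obtain ⟨k⟩ := (Fintype.card_pos_iff (α := ι)).mp (by omega)
    have hk := hA.diag_pos k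
    obtain ⟨d', hd', hSd'⟩ :=
      ih (fun _ _ => pivotSchur_nonpos hZ hk) (hA.pivotSchur k) (by simp [hn])
    exact exists_pos_mulVec_pos_of_pivotSchur hZ hk hd' hSd'

end Matrix

section WeightedContraction

variable {ι : Type*} [Fintype ι]

theorem exists_contractingWith_weighted_of_abs_sub_le_mulVec (T : (ι → ℝ) → ι → ℝ)
    {B : Matrix ι ι ℝ} (hB : ∀ i j, 0 ≤ B i j) {w : ι → ℝ} (hw : ∀ i, 0 < w i)
    (hBw : ∀ i, (B *ᵥ w) i < w i)
    (hT : ∀ p q i, |T p i - T q i| ≤ (B *ᵥ fun j => |p j - q j|) i) :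
    ∃ θ : ℝ≥0, ContractingWith θ fun x i => T (fun j => w j * x j) i / w i := by
  set θ : ℝ≥0 := univ.sup fun i => ((B *ᵥ w) i / w i).toNNReal
  have hθ : ∀ i, (B *ᵥ w) i ≤ θ * w i := fun i =>
    (div_le_iff₀ (hw i)).1 (Real.toNNReal_le_iff_le_coe.1 (le_sup (f := fun i =>
      ((B *ᵥ w) i / w i).toNNReal) (mem_univ i)))
  refine ⟨θ, (Finset.sup_lt_iff zero_lt_one).2 fun i _ =>
    Real.toNNReal_lt_one.2 ((div_lt_one (hw i)).2 (hBw i)), ?_⟩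
  refine LipschitzWith.of_dist_le_mul fun x y => (dist_pi_le_iff (by positivity)).2 fun i => ?_
  have hxy : ∀ j, |w j * x j - w j * y j| ≤ w j * dist x y := fun j => by
    rw [← mul_sub, abs_mul, abs_of_pos (hw j), ← Real.dist_eq]
    exact mul_le_mul_of_nonneg_left (dist_le_pi_dist x y j) (hw j).le
  calc dist (T (fun j => w j * x j) i / w i) (T (fun j => w j * y j) i / w i)
      = |T (fun j => w j * x j) i - T (fun j => w j * y j) i| / w i := by
        rw [Real.dist_eq, div_sub_div_same, abs_div, abs_of_pos (hw i)]
    _ ≤ (B *ᵥ w) i * dist x y / w i := by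
        refine div_le_div_of_nonneg_right ((hT _ _ i).trans ?_) (hw i).le
        simp only [mulVec, dotProduct, sum_mul, mul_assoc]
        exact sum_le_sum fun j _ => mul_le_mul_of_nonneg_left (hxy j) (hB i j)
    _ ≤ θ * dist x y := by
        rw [div_le_iff₀ (hw i), mul_right_comm]
        exact mul_le_mul_of_nonneg_right (hθ i) dist_nonneg

theorem exists_fixedPoint_tendsto_of_abs_sub_le_mulVec (T : (ι → ℝ) → ι → ℝ)
    {B : Matrix ι ι ℝ} (hB : ∀ i j, 0 ≤ B i j) {w : ι → ℝ} (hw : ∀ i, 0 < w i)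
    (hBw : ∀ i, (B *ᵥ w) i < w i)
    (hT : ∀ p q i, |T p i - T q i| ≤ (B *ᵥ fun j => |p j - q j|) i) :
    ∃ x, T x = x ∧ (∀ y, T y = y → y = x) ∧
      ∀ p, Tendsto (fun n => T^[n] p) atTop (𝓝 x) := by
  obtain ⟨θ, hF⟩ := exists_contractingWith_weighted_of_abs_sub_le_mulVec T hB hw hBw hT
  set F : (ι → ℝ) → ι → ℝ := fun x i => T (fun j => w j * x j) i / w i
  let scale : (ι → ℝ) → ι → ℝ := fun x j => w j * x j
  have hscale : Function.Semiconj scale F T := fun x => by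
    funext i
    simp only [scale, F]
    field_simp [(hw i).ne']
  have hunscale : ∀ y, scale (fun j => y j / w j) = y := fun y => by
    funext j
    simp only [scale]
    field_simp [(hw j).ne']
  refine ⟨scale (ContractingWith.fixedPoint F hF), ?_, fun y hy => ?_, fun p => ?_⟩
  · rw [← hscale, hF.fixedPoint_isFixedPt]
  · have hfix : Function.IsFixedPt F (fun j => y j / w j) := by
      funext i
      show T (scale _) i / w i = _
      rw [hunscale, hy]
    rw [← hunscale y, ← hF.fixedPoint_unique hfix]
  · rw [← hunscale p]
    simp only [← (hscale.iterate_right _) _]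
    exact ((continuous_pi fun j => continuous_const.mul (continuous_apply j)).tendsto _).comp
      (hF.tendsto_iterate_fixedPoint _)

end WeightedContraction

theorem euclidProj_mem {lo hi : ℝ} (h : lo ≤ hi) (x : ℝ) :
    euclidProj lo hi x ∈ Set.Icc lo hi :=
  (Set.projIcc lo hi h x).2

theorem abs_euclidProj_sub_le {lo hi : ℝ} (h : lo ≤ hi) (x y : ℝ) :
    |euclidProj lo hi x - euclidProj lo hi y| ≤ |x - y| :=
  Set.abs_projIcc_sub_projIcc h

theorem sub_euclidProj_mul_sub_euclidProj_nonpos {lo hi q : ℝ} (hq : q ∈ Set.Icc lo hi)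
    (u : ℝ) :
    (q - euclidProj lo hi u) * (u - euclidProj lo hi u) ≤ 0 := by
  obtain ⟨hlo, hhi⟩ := hq
  unfold euclidProj
  rcases le_total u lo with h | h
  · rw [min_eq_right (h.trans (hlo.trans hhi)), max_eq_left h]
    exact mul_nonpos_of_nonneg_of_nonpos (by linarith) (by linarith)
  · rcases le_total u hi with h' | h'
    · simp [min_eq_right h', max_eq_right h]
    · rw [min_eq_left h', max_eq_right (hlo.trans hhi)]
      exact mul_nonpos_of_nonpos_of_nonneg (by linarith) (by linarith)

theorem mul_log_one_add_mul_sub_lt_of_ne_euclidProj {c l g b q : ℝ} (hc : 0 < c) (hl : 0 < l)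
    (hg : 0 < g) (hq : q ∈ Set.Icc 0 b) (hne : q ≠ euclidProj 0 b (c / l - 1 / g)) :
    c * Real.log (1 + g * q) - l * q <
      c * Real.log (1 + g * euclidProj 0 b (c / l - 1 / g)) -
        l * euclidProj 0 b (c / l - 1 / g) := by
  set u := c / l - 1 / g
  set q' := euclidProj 0 b u
  have hq' : 0 ≤ q' := (euclidProj_mem (hq.1.trans hq.2) u).1
  have hpos : 0 < 1 + g * q := by nlinarith [hq.1]
  have hpos' : 0 < 1 + g * q' := by nlinarith
  have hlog : Real.log (1 + g * q) - Real.log (1 + g * q') < g * (q - q') / (1 + g * q') := by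
    have hratio : (1 + g * q) / (1 + g * q') ≠ 1 := fun h =>
      hne (by rw [div_eq_one_iff_eq hpos'.ne'] at h; nlinarith)
    rw [← Real.log_div hpos.ne' hpos'.ne']
    convert Real.log_lt_sub_one_of_pos (div_pos hpos hpos') hratio using 1
    field_simp
    ring
  -- first-order optimality of `q'`: the variational inequality of the projection
  have hopt : l * g * ((q - q') * (u - q')) / (1 + g * q') ≤ 0 :=
    div_nonpos_of_nonpos_of_nonneg (mul_nonpos_of_nonneg_of_nonpos (by positivity)
      (sub_euclidProj_mul_sub_euclidProj_nonpos hq u)) hpos'.le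
  have hlin : c * (g * (q - q') / (1 + g * q')) - l * (q - q') =
      l * g * ((q - q') * (u - q')) / (1 + g * q') := by
    simp only [u]
    field_simp
    ring
  nlinarith [mul_lt_mul_of_pos_left hlog hc]

noncomputable def normalizedInterference (M : ℕ) (a : Fin M → Fin M → ℝ) :
    Matrix (Fin M) (Fin M) ℝ :=
  fun i j => if i = j then 0 else a i j / a i i

noncomputable def parallelUpdate (M : ℕ) (W σ2 : ℝ) (α lam pmax : Fin M → ℝ)
    (a : Fin M → Fin M → ℝ) (p : Fin M → ℝ) : Fin M → ℝ :=
  fun i => euclidProj 0 (pmax i) (α i * W / lam i - 1 / gain M σ2 a p i)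

section Game

variable {M : ℕ} {W σ2 : ℝ} {α lam pmax : Fin M → ℝ} {a : Fin M → Fin M → ℝ}

theorem normalizedInterference_nonneg (ha : ∀ i j, 0 ≤ a i j) (i j : Fin M) :
    0 ≤ normalizedInterference M a i j := by
  unfold normalizedInterference
  split_ifs
  exacts [le_rfl, div_nonneg (ha i j) (ha i i)]

theorem normalizedInterference_mulVec_apply (x : Fin M → ℝ) (i : Fin M) :
    (normalizedInterference M a *ᵥ x) i = (∑ j ∈ univ.erase i, a i j * x j) / a i i := by
  rw [mulVec, dotProduct, ← sum_erase (a := i) _ (by simp [normalizedInterference]), sum_div]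
  exact sum_congr rfl fun j hj => by
    rw [normalizedInterference, if_neg (ne_of_mem_erase hj).symm, div_mul_eq_mul_div]

theorem one_div_gain (p : Fin M → ℝ) (i : Fin M) :
    1 / gain M σ2 a p i = (normalizedInterference M a *ᵥ p) i + σ2 / a i i := by
  rw [gain, one_div_div, normalizedInterference_mulVec_apply, add_div]

theorem abs_mulVec_sub_mulVec_le {ι : Type*} [Fintype ι] {B : Matrix ι ι ℝ}
    (hB : ∀ i j, 0 ≤ B i j) (p q : ι → ℝ) (i : ι) :
    |(B *ᵥ p) i - (B *ᵥ q) i| ≤ (B *ᵥ fun j => |p j - q j|) i := by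
  rw [← Pi.sub_apply, ← mulVec_sub]
  refine (abs_sum_le_sum_abs _ _).trans_eq (sum_congr rfl fun j _ => ?_)
  rw [abs_mul, abs_of_nonneg (hB i j), Pi.sub_apply]

theorem abs_parallelUpdate_sub_le (ha : ∀ i j, 0 ≤ a i j) (hpmax : ∀ i, 0 ≤ pmax i)
    (p q : Fin M → ℝ) (i : Fin M) :
    |parallelUpdate M W σ2 α lam pmax a p i - parallelUpdate M W σ2 α lam pmax a q i| ≤
      (normalizedInterference M a *ᵥ fun j => |p j - q j|) i := by
  refine (abs_euclidProj_sub_le (hpmax i) _ _).trans ?_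
  rw [one_div_gain, one_div_gain, sub_sub_sub_cancel_left, add_sub_add_right_eq_sub, abs_sub_comm]
  exact abs_mulVec_sub_mulVec_le (normalizedInterference_nonneg ha) p q i

theorem parallelUpdate_mem_stratBox (hpmax : ∀ i, 0 ≤ pmax i) (p : Fin M → ℝ) :
    parallelUpdate M W σ2 α lam pmax a p ∈ stratBox M pmax :=
  fun i => euclidProj_mem (hpmax i) _

theorem gain_update_self (p : Fin M → ℝ) (i : Fin M) (x : ℝ) :
    gain M σ2 a (Function.update p i x) i = gain M σ2 a p i := by
  unfold gain
  congr 2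
  exact sum_congr rfl fun j hj => by rw [Function.update_of_ne (ne_of_mem_erase hj)]

theorem payoff_update_self (p : Fin M → ℝ) (i : Fin M) (x : ℝ) :
    payoff M W σ2 α lam a (Function.update p i x) i =
      α i * W * Real.log (1 + gain M σ2 a p i * x) - lam i * x := by
  rw [payoff, gain_update_self, Function.update_self]

theorem gain_pos (hσ2 : 0 < σ2) (ha : ∀ i j, 0 ≤ a i j) (haii : ∀ i, 0 < a i i)
    {p : Fin M → ℝ} (hp : ∀ j, 0 ≤ p j) (i : Fin M) : 0 < gain M σ2 a p i :=
  div_pos (haii i)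
    (add_pos_of_nonneg_of_pos (sum_nonneg fun j _ => mul_nonneg (ha i j) (hp j)) hσ2)

theorem payoff_update_lt_of_ne_parallelUpdate (hW : 0 < W) (hσ2 : 0 < σ2) (hα : ∀ i, 0 < α i)
    (hlam : ∀ i, 0 < lam i) (ha : ∀ i j, 0 ≤ a i j) (haii : ∀ i, 0 < a i i)
    {p : Fin M → ℝ} (hp : p ∈ stratBox M pmax) {i : Fin M} {q : ℝ}
    (hq : q ∈ Set.Icc 0 (pmax i)) (hne : q ≠ parallelUpdate M W σ2 α lam pmax a p i) :
    payoff M W σ2 α lam a (Function.update p i q) i <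
      payoff M W σ2 α lam a
        (Function.update p i (parallelUpdate M W σ2 α lam pmax a p i)) i := by
  rw [payoff_update_self, payoff_update_self]
  exact mul_log_one_add_mul_sub_lt_of_ne_euclidProj (mul_pos (hα i) hW) (hlam i)
    (gain_pos hσ2 ha haii (fun j => (hp j).1) i) hq hne

theorem isNE_iff_parallelUpdate_eq (hW : 0 < W) (hσ2 : 0 < σ2) (hα : ∀ i, 0 < α i)
    (hlam : ∀ i, 0 < lam i) (ha : ∀ i j, 0 ≤ a i j) (haii : ∀ i, 0 < a i i)
    {p : Fin M → ℝ} (hp : p ∈ stratBox M pmax) :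
    IsNE M W σ2 α lam pmax a p ↔ parallelUpdate M W σ2 α lam pmax a p = p := by
  have hpmax : ∀ i, 0 ≤ pmax i := fun i => (hp i).1.trans (hp i).2
  constructor
  · refine fun hNE => funext fun i => by_contra fun h => ?_
    have := payoff_update_lt_of_ne_parallelUpdate hW hσ2 hα hlam ha haii hp (hp i) (Ne.symm h)
    rw [Function.update_eq_self] at this
    exact (hNE i _ (parallelUpdate_mem_stratBox hpmax p i)).not_gt this
  · intro hfix i q hq
    rcases eq_or_ne q (p i) with rfl | h
    · rw [Function.update_eq_self]
    · have := payoff_update_lt_of_ne_parallelUpdate hW hσ2 hα hlam ha haii hp hq (by rwa [hfix])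
      rw [hfix, Function.update_eq_self] at this
      exact this.le

theorem Qmat_le_of_ne (hσ2 : 0 < σ2) (hW : 0 < W) (hα : ∀ i, 0 < α i)
    (hpmax : ∀ i, 0 ≤ pmax i) (ha : ∀ i j, 0 ≤ a i j) {i j : Fin M} (hij : i ≠ j) :
    Qmat M W σ2 α pmax a i j ≤ -(α i * W * (a i j / a j j)) := by
  have hκ : 0 ≤ σ2⁻¹ * ∑ k, a j k * pmax k :=
    mul_nonneg (inv_nonneg.2 hσ2.le) (sum_nonneg fun k _ => mul_nonneg (ha j k) (hpmax k))
  have hc : 0 ≤ α i * W * (a i j / a j j) := by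
    have := hα i; have := ha i j; have := ha j j; positivity
  rw [Qmat, if_neg hij, neg_le_neg_iff]
  nlinarith

theorem Qmat_nonpos_of_ne (hσ2 : 0 < σ2) (hW : 0 < W) (hα : ∀ i, 0 < α i)
    (hpmax : ∀ i, 0 ≤ pmax i) (ha : ∀ i j, 0 ≤ a i j) {i j : Fin M} (hij : i ≠ j) :
    Qmat M W σ2 α pmax a i j ≤ 0 :=
  (Qmat_le_of_ne hσ2 hW hα hpmax ha hij).trans
    (neg_nonpos.2 (by have := hα i; have := ha i j; have := ha j j; positivity))

theorem normalizedInterference_mulVec_lt (hσ2 : 0 < σ2) (hW : 0 < W) (hα : ∀ i, 0 < α i)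
    (hpmax : ∀ i, 0 ≤ pmax i) (ha : ∀ i j, 0 ≤ a i j) (haii : ∀ i, 0 < a i i)
    {w : Fin M → ℝ} (hw : ∀ j, 0 ≤ w j)
    (hQw : ∀ i, 0 < (Qmat M W σ2 α pmax a *ᵥ fun j => a j j * w j) i) (i : Fin M) :
    (normalizedInterference M a *ᵥ w) i < w i := by
  have hαW : 0 < α i * W := mul_pos (hα i) hW
  have hoff : ∑ j ∈ univ.erase i, Qmat M W σ2 α pmax a i j * (a j j * w j) ≤
      -(α i * W * ∑ j ∈ univ.erase i, a i j * w j) := by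
    rw [mul_sum, ← sum_neg_distrib]
    refine sum_le_sum fun j hj => ?_
    calc Qmat M W σ2 α pmax a i j * (a j j * w j)
        ≤ -(α i * W * (a i j / a j j)) * (a j j * w j) :=
          mul_le_mul_of_nonneg_right (Qmat_le_of_ne hσ2 hW hα hpmax ha (ne_of_mem_erase hj).symm)
            (mul_nonneg (haii j).le (hw j))
      _ = -(α i * W * (a i j * w j)) := by field_simp [(haii j).ne']
  have h := hQw i
  rw [mulVec, dotProduct, ← add_sum_erase _ _ (mem_univ i), Qmat, if_pos rfl] at h
  rw [normalizedInterference_mulVec_apply, div_lt_iff₀ (haii i)]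
  nlinarith

end Game

theorem parallelUpdate_tendsto_unique_NE_general (M : ℕ) (W σ2 : ℝ)
    (hW : 0 < W) (hσ2 : 0 < σ2) (α lam pmax : Fin M → ℝ)
    (a : Fin M → Fin M → ℝ)
    (hα : ∀ i, 0 < α i) (hlam : ∀ i, 0 < lam i) (hpmax : ∀ i, 0 < pmax i)
    (ha : ∀ i ℓ, 0 ≤ a i ℓ) (haii : ∀ i, 0 < a i i)
    (hQ : IsPMatrix (Qmat M W σ2 α pmax a))
    (pseq : ℕ → Fin M → ℝ)
    (hstep : ∀ s i, pseq (s + 1) i =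
      euclidProj 0 (pmax i) (α i * W / lam i - 1 / gain M σ2 a (pseq s) i)) :
    ∃ pstar : Fin M → ℝ,
      Filter.Tendsto pseq Filter.atTop (nhds pstar) ∧
      pstar ∈ stratBox M pmax ∧ IsNE M W σ2 α lam pmax a pstar ∧
      ∀ q : Fin M → ℝ,
        q ∈ stratBox M pmax → IsNE M W σ2 α lam pmax a q → q = pstar := by
  have hpmax' : ∀ i, 0 ≤ pmax i := fun i => (hpmax i).le
  set T := parallelUpdate M W σ2 α lam pmax a
  obtain ⟨d, hd, hQd⟩ := Matrix.exists_pos_mulVec_pos_of_hasPosPrincipalMinors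
    (fun _ _ => Qmat_nonpos_of_ne hσ2 hW hα hpmax' ha) hQ
  have hw : ∀ j, 0 < d j / a j j := fun j => div_pos (hd j) (haii j)
  have hBw := normalizedInterference_mulVec_lt hσ2 hW hα hpmax' ha haii (fun j => (hw j).le)
    (by simpa only [mul_div_cancel₀ _ (haii _).ne'] using hQd)
  obtain ⟨pstar, hfix, huniq, htend⟩ := exists_fixedPoint_tendsto_of_abs_sub_le_mulVec T
    (normalizedInterference_nonneg ha) hw hBw (abs_parallelUpdate_sub_le ha hpmax')
  have hseq : pseq = fun s => T^[s] (pseq 0) := funext fun s => by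
    induction s with
    | zero => rfl
    | succ s ih => rw [Function.iterate_succ_apply', ← ih]; exact funext (hstep s)
  have hstar : pstar ∈ stratBox M pmax := hfix ▸ parallelUpdate_mem_stratBox hpmax' pstar
  refine ⟨pstar, hseq ▸ htend _, hstar,
    (isNE_iff_parallelUpdate_eq hW hσ2 hα hlam ha haii hstar).2 hfix, fun q hq hNE => ?_⟩
  exact huniq q ((isNE_iff_parallelUpdate_eq hW hσ2 hα hlam ha haii hq).1 hNE)

/-- **Proposition 3, convergence of the parallel updating
algorithm.** Suppose `α_i > 0`, `λ_i > 0` for all `i`, and `Q` is a P-matrix.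
Then for every initial profile `p⁽⁰⁾ ∈ P`, the parallel-update sequence
`p⁽ˢ⁺¹⁾_i = [α_i·W/λ_i − 1/g_i(p⁽ˢ⁾)]_0^{p_i^max}` converges, and its limit is the
unique Nash equilibrium of the game. -/
theorem parallelUpdate_tendsto_unique_NE (M : ℕ) (hM : 1 ≤ M) (W σ2 : ℝ)
    (hW : 0 < W) (hσ2 : 0 < σ2) (α lam pmax : Fin M → ℝ)
    (a : Fin M → Fin M → ℝ)
    (hα : ∀ i, 0 < α i) (hlam : ∀ i, 0 < lam i) (hpmax : ∀ i, 0 < pmax i)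
    (ha : ∀ i ℓ, 0 ≤ a i ℓ) (haii : ∀ i, 0 < a i i)
    (hQ : IsPMatrix (Qmat M W σ2 α pmax a))
    (pseq : ℕ → Fin M → ℝ) (h0 : pseq 0 ∈ stratBox M pmax)
    (hstep : ∀ s i, pseq (s + 1) i =
      euclidProj 0 (pmax i) (α i * W / lam i - 1 / gain M σ2 a (pseq s) i)) :
    ∃ pstar : Fin M → ℝ,
      Filter.Tendsto pseq Filter.atTop (nhds pstar) ∧
      pstar ∈ stratBox M pmax ∧ IsNE M W σ2 α lam pmax a pstar ∧
      ∀ q : Fin M → ℝ,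
        q ∈ stratBox M pmax → IsNE M W σ2 α lam pmax a q → q = pstar :=
  parallelUpdate_tendsto_unique_NE_general M W σ2 hW hσ2 α lam pmax a hα hlam hpmax ha haii hQ pseq
    hstep
end
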